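/- arXiv:1905.08589 — 10 statements merged into one kernel-verified Lean document; each statement's English description precedes it below -/
import Mathlib

section
/- Let f be a polynomial of one variable with integer coefficients such that f(n) is a positive integer for every positive integer n, and suppose that for every prime number p the reduction map f_p : ℤ/pℤ → ℤ/pℤ induced by f is not a cyclic permutation of length p. For positive integers a and b, let g : ℕ⁺ → ℕ⁺ be g(n) = f^n(a) (the n-th iterate of f at a), and consider the sequence n ↦ g^n(b). Then for all positive integers a, b with g^n(b) → ∞ (in ℝ) as n → ∞, for every prime p the sequence (g^n(b))_n converges in the ring ℤ_p of p-adic integers; moreover, if b' is another positive integer with g^n(b') → ∞, then lim_{n→∞} g^n(b) = lim_{n→∞} g^n(b') in ℤ_p. -/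
open Filter

/-- `σ` is a cyclic permutation of length `p` of its (finite) domain: it is a
bijection and the iterates of some element pass through all elements within
`p` steps. -/
def IsCyclicPermOfLength {F : Type*} (σ : F → F) (p : ℕ) : Prop :=
  Function.Bijective σ ∧ ∃ x : F, ∀ y : F, ∃ i : ℕ, i < p ∧ σ^[i] x = y

/-- The reduction `f_m : ℤ/mℤ → ℤ/mℤ` of a polynomial `f ∈ ℤ[x]`. -/
def polyRed (f : Polynomial ℤ) (m : ℕ) : ZMod m → ZMod m :=
  fun x => Polynomial.eval₂ (Int.castRingHom (ZMod m)) x f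

/-- `g(n) = f^n(a)` as a map `ℕ → ℕ` (`f` maps positive integers to positive
integers, so `toNat` is harmless). -/
def towerStep (f : Polynomial ℤ) (a : ℕ) : ℕ → ℕ :=
  fun m => ((fun z => f.eval z)^[m] (a : ℤ)).toNat

/-- The sequence `n ↦ g^n(b)` where `g(n) = f^n(a)`. -/
def towerSeq (f : Polynomial ℤ) (a b : ℕ) : ℕ → ℕ :=
  fun n => (towerStep f a)^[n] b

lemma iter_pos (f : Polynomial ℤ) (hpos : ∀ n : ℤ, 0 < n → 0 < f.eval n) {a : ℤ} (ha : 0 < a)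
    (m : ℕ) : 0 < (fun z => f.eval z)^[m] a := by
  induction m with
  | zero => simpa
  | succ m ih => rw [Function.iterate_succ_apply']; exact hpos _ ih

lemma towerStep_cast (f : Polynomial ℤ) (hpos : ∀ n : ℤ, 0 < n → 0 < f.eval n) {a : ℕ}
    (ha : 0 < a) (m : ℕ) :
    ((towerStep f a m : ℤ)) = (fun z => f.eval z)^[m] (a : ℤ) :=
  Int.toNat_of_nonneg (iter_pos f hpos (by exact_mod_cast ha) m).le

lemma eval_cast_zmod (f : Polynomial ℤ) (M : ℕ) (z : ℤ) :
    ((f.eval z : ℤ) : ZMod M) = polyRed f M ((z : ZMod M)) := by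
  have := Polynomial.eval₂_hom (Int.castRingHom (ZMod M)) z (p := f)
  simpa [polyRed] using this.symm

lemma towerStep_zmod (f : Polynomial ℤ) (hpos : ∀ n : ℤ, 0 < n → 0 < f.eval n) {a : ℕ}
    (ha : 0 < a) (M m : ℕ) :
    ((towerStep f a m : ℕ) : ZMod M) = (polyRed f M)^[m] ((a : ℕ) : ZMod M) := by
  induction m with
  | zero => simp [towerStep]
  | succ m ih =>
    have h1 : (towerStep f a (m + 1) : ℤ) = f.eval (towerStep f a m : ℤ) := by
      rw [towerStep_cast f hpos ha, towerStep_cast f hpos ha, Function.iterate_succ_apply']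
    have h2 : ((towerStep f a (m + 1) : ℕ) : ZMod M) = polyRed f M ((towerStep f a m : ℕ) : ZMod M) := by
      have := congrArg (fun z : ℤ => (z : ZMod M)) h1
      simpa [eval_cast_zmod] using this
    rw [h2, ih, Function.iterate_succ_apply']

lemma polyRed_comm (f : Polynomial ℤ) {q M : ℕ} (hqM : q ∣ M) (x : ZMod M) :
    (ZMod.castHom hqM (ZMod q)) (polyRed f M x) = polyRed f q ((ZMod.castHom hqM (ZMod q)) x) := by
  unfold polyRed
  rw [Polynomial.hom_eval₂]
  congr 1
  exact RingHom.ext_int _ _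

lemma polyRed_comm_iter (f : Polynomial ℤ) {q M : ℕ} (hqM : q ∣ M) (m : ℕ) (x : ZMod M) :
    (ZMod.castHom hqM (ZMod q)) ((polyRed f M)^[m] x)
      = (polyRed f q)^[m] ((ZMod.castHom hqM (ZMod q)) x) := by
  induction m with
  | zero => rfl
  | succ m ih => rw [Function.iterate_succ_apply', Function.iterate_succ_apply',
      polyRed_comm f hqM, ih]

lemma cyclic_of_full (f : Polynomial ℤ) {M : ℕ} (hM : 2 ≤ M) (x₀ : ZMod M)
    (hinj : ∀ u v : ℕ, u < M → v < M → (polyRed f M)^[u] x₀ = (polyRed f M)^[v] x₀ → u = v)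
    (hcyc : (polyRed f M)^[M] x₀ = x₀)
    {q : ℕ} (hq : q.Prime) (hqM : q ∣ M) : IsCyclicPermOfLength (polyRed f q) q := by
  haveI : NeZero M := ⟨by omega⟩
  haveI : Fact q.Prime := ⟨hq⟩
  set g := polyRed f M with hg
  set h := polyRed f q with hh
  set π := ZMod.castHom hqM (ZMod q) with hπ
  -- surjectivity of the orbit map in ZMod M
  have hbijM : Function.Bijective (fun i : Fin M => g^[i.1] x₀) := by
    rw [Fintype.bijective_iff_injective_and_card]
    constructor
    · intro u v huv
      exact Fin.ext (hinj u.1 v.1 u.2 v.2 huv)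
    · simp [ZMod.card]
  set y₀ := π x₀ with hy₀
  have horb : ∀ y : ZMod q, ∃ m : ℕ, h^[m] y₀ = y := by
    intro y
    obtain ⟨nY, hY⟩ := ZMod.natCast_zmod_surjective (n := q) y
    obtain ⟨⟨m, hm⟩, hme⟩ := hbijM.surjective ((nY : ZMod M))
    refine ⟨m, ?_⟩
    rw [hy₀, ← polyRed_comm_iter f hqM]
    simp only at hme
    rw [hme, map_natCast, hY]
  have hy₀per : h^[M] y₀ = y₀ := by
    rw [hy₀, ← polyRed_comm_iter f hqM, hcyc]
  have hsurj : Function.Surjective h := by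
    intro y
    obtain ⟨m, hm⟩ := horb y
    cases m with
    | zero =>
      refine ⟨h^[M - 1] y₀, ?_⟩
      rw [← Function.iterate_succ_apply' h (M - 1) y₀]
      have hM1 : (M - 1).succ = M := by omega
      rw [hM1, hy₀per]
      exact hm
    | succ m => exact ⟨h^[m] y₀, by
        rw [← Function.iterate_succ_apply' h m y₀]; exact hm⟩
  have hbij : Function.Bijective h := hsurj.bijective_of_finite
  -- minimal period
  have hP : ∃ n : ℕ, 0 < n ∧ h^[n] y₀ = y₀ := ⟨M, by omega, hy₀per⟩
  classical
  set d := Nat.find hP with hd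
  obtain ⟨hd1, hdy⟩ : 0 < d ∧ h^[d] y₀ = y₀ := Nat.find_spec hP
  have hdk : ∀ k : ℕ, h^[d * k] y₀ = y₀ := by
    intro k
    induction k with
    | zero => simp
    | succ k ih =>
      have : d * (k + 1) = d * k + d := by ring
      rw [this, Function.iterate_add_apply, hdy, ih]
  have hmod : ∀ m : ℕ, h^[m] y₀ = h^[m % d] y₀ := by
    intro m
    conv_lhs => rw [← Nat.mod_add_div m d]
    rw [Function.iterate_add_apply, hdk]
  have hd_le_q : d ≤ q := by
    have hinj' : Function.Injective (fun i : Fin d => h^[i.1] y₀) := by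
      rintro ⟨i, hi⟩ ⟨j, hj⟩ hij
      simp only at hij
      rcases lt_trichotomy i j with hlt | heq | hlt
      · exfalso
        have : h^[i] (h^[j - i] y₀) = h^[i] y₀ := by
          rw [← Function.iterate_add_apply]
          have : i + (j - i) = j := by omega
          rw [this, hij]
        have h2 : h^[j - i] y₀ = y₀ := (hbij.injective.iterate i) this
        exact Nat.find_min hP (by omega : j - i < d) ⟨by omega, h2⟩
      · exact Fin.ext heq
      · exfalso
        have : h^[j] (h^[i - j] y₀) = h^[j] y₀ := by
          rw [← Function.iterate_add_apply]
          have : j + (i - j) = i := by omega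
          rw [this, hij]
        have h2 : h^[i - j] y₀ = y₀ := (hbij.injective.iterate j) this
        exact Nat.find_min hP (by omega : i - j < d) ⟨by omega, h2⟩
    have := Fintype.card_le_of_injective _ hinj'
    simpa [ZMod.card] using this
  refine ⟨hbij, y₀, fun y => ?_⟩
  obtain ⟨m, hm⟩ := horb y
  exact ⟨m % d, lt_of_lt_of_le (Nat.mod_lt _ hd1) hd_le_q, by rw [← hmod]; exact hm⟩

lemma exists_period (f : Polynomial ℤ) (hpos : ∀ n : ℤ, 0 < n → 0 < f.eval n)
    (hts : ∀ p : ℕ, p.Prime → ¬ IsCyclicPermOfLength (polyRed f p) p)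
    {a : ℕ} (ha : 0 < a) {M : ℕ} (hM : 2 ≤ M) :
    ∃ N L : ℕ, 1 ≤ L ∧ L < M ∧ ∀ m m' : ℕ, N ≤ m → N ≤ m' → m ≡ m' [MOD L] →
      towerStep f a m ≡ towerStep f a m' [MOD M] := by
  classical
  haveI : NeZero M := ⟨by omega⟩
  set g := polyRed f M with hg
  set x₀ := ((a : ℕ) : ZMod M) with hx₀
  have hPex : ∃ j : ℕ, (∃ i, i < j ∧ g^[i] x₀ = g^[j] x₀) ∧ j ≤ M := by
    have hcard : Fintype.card (ZMod M) < Fintype.card (Fin (M + 1)) := by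
      simp [ZMod.card]
    obtain ⟨i, j, hne, he⟩ := Fintype.exists_ne_map_eq_of_card_lt
      (fun i : Fin (M + 1) => g^[i.1] x₀) hcard
    rcases lt_or_gt_of_ne (fun h => hne (Fin.ext h) : i.1 ≠ j.1) with hlt | hlt
    · exact ⟨j.1, ⟨i.1, hlt, he⟩, by omega⟩
    · exact ⟨i.1, ⟨j.1, hlt, he.symm⟩, by omega⟩
  have hP : ∃ j : ℕ, ∃ i, i < j ∧ g^[i] x₀ = g^[j] x₀ := ⟨hPex.choose, hPex.choose_spec.1⟩
  set j₀ := Nat.find hP with hj₀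
  obtain ⟨i₀, hi₀lt, heq⟩ := Nat.find_spec hP
  have hj₀M : j₀ ≤ M := le_trans (Nat.find_min' hP hPex.choose_spec.1) hPex.choose_spec.2
  have hmin : ∀ u v : ℕ, u < v → v < j₀ → g^[u] x₀ ≠ g^[v] x₀ := by
    intro u v huv hv hne
    exact Nat.find_min hP hv ⟨u, huv, hne⟩
  by_cases hcase : i₀ = 0 ∧ j₀ = M
  · exfalso
    obtain ⟨hi0, hj0⟩ := hcase
    have hinj : ∀ u v : ℕ, u < M → v < M → g^[u] x₀ = g^[v] x₀ → u = v := by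
      intro u v hu hv he
      rcases lt_trichotomy u v with h | h | h
      · exact absurd he (hmin u v h (by omega))
      · exact h
      · exact absurd he.symm (hmin v u h (by omega))
    have hcyc : g^[M] x₀ = x₀ := by
      have := heq
      rw [hi0, ← hj₀, hj0] at this
      simpa using this.symm
    obtain ⟨q, hq, hqM⟩ := Nat.exists_prime_and_dvd (n := M) (by omega)
    exact hts q hq (cyclic_of_full f hM x₀ hinj hcyc hq hqM)
  · refine ⟨i₀, j₀ - i₀, by omega, by omega, ?_⟩
    have hstep : ∀ m, i₀ ≤ m → g^[m + (j₀ - i₀)] x₀ = g^[m] x₀ := by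
      intro m hm
      have h1 : m + (j₀ - i₀) = (m - i₀) + j₀ := by omega
      have h2 : m = (m - i₀) + i₀ := by omega
      rw [h1, Function.iterate_add_apply, ← heq, ← Function.iterate_add_apply, ← h2]
    have hper : ∀ k m, i₀ ≤ m → g^[m + (j₀ - i₀) * k] x₀ = g^[m] x₀ := by
      intro k
      induction k with
      | zero => simp
      | succ k ih =>
        intro m hm
        have h1 : m + (j₀ - i₀) * (k + 1) = (m + (j₀ - i₀) * k) + (j₀ - i₀) := by ring
        rw [h1, hstep _ (by omega), ih m hm]
    have hmain : ∀ m m' : ℕ, i₀ ≤ m → i₀ ≤ m' → m ≡ m' [MOD j₀ - i₀] →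
        g^[m] x₀ = g^[m'] x₀ := by
      have haux : ∀ m m' : ℕ, m ≤ m' → i₀ ≤ m → i₀ ≤ m' → m ≡ m' [MOD j₀ - i₀] →
          g^[m] x₀ = g^[m'] x₀ := by
        intro m m' hle hm hm' hmod
        obtain ⟨k, hk⟩ := (Nat.modEq_iff_dvd' hle).mp hmod
        have : m' = m + (j₀ - i₀) * k := by omega
        rw [this, hper k m hm]
      intro m m' hm hm' hmod
      rcases le_total m m' with h | h
      · exact haux m m' h hm hm' hmod
      · exact (haux m' m h hm' hm hmod.symm).symm
    intro m m' hm hm' hmod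
    have := hmain m m' hm hm' hmod
    rw [← towerStep_zmod f hpos ha, ← towerStep_zmod f hpos ha] at this
    exact (ZMod.natCast_eq_natCast_iff _ _ _).mp this

lemma key_modeq (f : Polynomial ℤ) (hpos : ∀ n : ℤ, 0 < n → 0 < f.eval n)
    (hts : ∀ p : ℕ, p.Prime → ¬ IsCyclicPermOfLength (polyRed f p) p)
    {a : ℕ} (ha : 0 < a) :
    ∀ M : ℕ, 1 ≤ M → ∃ c : ℕ, ∀ b : ℕ, 0 < b →
      Tendsto (fun n => (towerSeq f a b n : ℝ)) atTop atTop →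
      ∀ᶠ n in atTop, towerSeq f a b n ≡ c [MOD M] := by
  intro M
  induction M using Nat.strong_induction_on with
  | _ M IH =>
    intro hM1
    rcases eq_or_lt_of_le hM1 with h1 | h2
    · exact ⟨0, fun b hb hT => Eventually.of_forall fun n => by
        rw [← h1]; exact Nat.modEq_one⟩
    · obtain ⟨N, L, hL1, hLM, hper⟩ := exists_period f hpos hts ha h2
      obtain ⟨cL, hcL⟩ := IH L hLM hL1
      set m₀ := cL % L + N * L with hm₀def
      have hm₀N : N ≤ m₀ := by
        calc N = N * 1 := (Nat.mul_one N).symm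
        _ ≤ N * L := Nat.mul_le_mul_left N hL1
        _ ≤ m₀ := Nat.le_add_left _ _
      have hm₀mod : m₀ ≡ cL [MOD L] := by
        show m₀ % L = cL % L
        rw [hm₀def, Nat.add_mul_mod_self_right, Nat.mod_mod_of_dvd _ dvd_rfl]
      refine ⟨towerStep f a m₀, ?_⟩
      intro b hb hT
      have hN : ∀ᶠ n in atTop, N ≤ towerSeq f a b n := by
        filter_upwards [hT.eventually_ge_atTop (N : ℝ)] with n hn
        exact_mod_cast hn
      have hmain : ∀ᶠ n in atTop, towerSeq f a b (n + 1) ≡ towerStep f a m₀ [MOD M] := by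
        filter_upwards [hN, hcL b hb hT] with n h1 h2
        have hiter : towerSeq f a b (n + 1) = towerStep f a (towerSeq f a b n) :=
          Function.iterate_succ_apply' _ _ _
        rw [hiter]
        exact hper _ _ h1 hm₀N (h2.trans hm₀mod.symm)
      rw [eventually_atTop] at hmain ⊢
      obtain ⟨N', hN'⟩ := hmain
      refine ⟨N' + 1, fun n hn => ?_⟩
      have := hN' (n - 1) (by omega)
      rwa [Nat.sub_add_cancel (by omega)] at this


theorem stmt_0 (f : Polynomial ℤ)
    (hpos : ∀ n : ℤ, 0 < n → 0 < f.eval n)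
    (hts : ∀ p : ℕ, p.Prime → ¬ IsCyclicPermOfLength (polyRed f p) p)
    (p : ℕ) [Fact p.Prime] (a : ℕ) (ha : 0 < a) :
    ∃ L : ℤ_[p], ∀ b : ℕ, 0 < b →
      Tendsto (fun n => (towerSeq f a b n : ℝ)) atTop atTop →
      Tendsto (fun n => (towerSeq f a b n : ℤ_[p])) atTop (nhds L) := by
  classical
  have hp := (Fact.out : p.Prime)
  -- distance bound from congruence
  have hdist : ∀ (k x y : ℕ), x ≡ y [MOD p ^ k] →
      dist ((x : ℤ_[p])) ((y : ℤ_[p])) ≤ (p : ℝ) ^ (-(k : ℤ)) := by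
    intro k x y hxy
    have hdvd : ((p : ℤ) ^ k) ∣ ((x : ℤ) - (y : ℤ)) := by
      have := (Nat.modEq_iff_dvd (n := p ^ k)).mp hxy
      push_cast at this ⊢
      exact dvd_sub_comm.mp this
    have : ‖(((x : ℤ) - (y : ℤ) : ℤ) : ℤ_[p])‖ ≤ (p : ℝ) ^ (-(k : ℤ)) :=
      PadicInt.norm_int_le_pow_iff_dvd.mpr hdvd
    rw [dist_eq_norm]
    have hc : (((x : ℤ) - (y : ℤ) : ℤ) : ℤ_[p]) = (x : ℤ_[p]) - (y : ℤ_[p]) := by push_cast; ring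
    rwa [hc] at this
  -- find k with p^{-k} < ε
  have hsmall : ∀ ε : ℝ, 0 < ε → ∃ k : ℕ, (p : ℝ) ^ (-(k : ℤ)) < ε := by
    intro ε hε
    have hp1 : (1 : ℝ) < (p : ℝ) := by exact_mod_cast hp.one_lt
    obtain ⟨k, hk⟩ := exists_pow_lt_of_lt_one hε (by
      rw [inv_lt_one_iff₀]; right; exact hp1 : (p : ℝ)⁻¹ < 1)
    refine ⟨k, ?_⟩
    rw [zpow_neg, zpow_natCast]
    calc ((p : ℝ) ^ k)⁻¹ = ((p : ℝ)⁻¹) ^ k := by rw [inv_pow]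
    _ < ε := hk
  by_cases hex : ∃ b : ℕ, 0 < b ∧ Tendsto (fun n => (towerSeq f a b n : ℝ)) atTop atTop
  · obtain ⟨b₀, hb₀, hT₀⟩ := hex
    set u : ℕ → ℤ_[p] := fun n => (towerSeq f a b₀ n : ℤ_[p]) with hu
    have hkey : ∀ k : ℕ, ∃ c : ℕ, ∀ b : ℕ, 0 < b →
        Tendsto (fun n => (towerSeq f a b n : ℝ)) atTop atTop →
        ∀ᶠ n in atTop, towerSeq f a b n ≡ c [MOD p ^ k] :=
      fun k => key_modeq f hpos hts ha (p ^ k) (Nat.one_le_pow _ _ hp.pos)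
    have hcauchy : CauchySeq u := by
      rw [Metric.cauchySeq_iff]
      intro ε hε
      obtain ⟨k, hk⟩ := hsmall ε hε
      obtain ⟨c, hc⟩ := hkey k
      obtain ⟨N, hN⟩ := eventually_atTop.mp (hc b₀ hb₀ hT₀)
      refine ⟨N, fun m hm n hn => ?_⟩
      have h1 := hN m hm
      have h2 := hN n hn
      calc dist (u m) (u n) ≤ (p : ℝ) ^ (-(k : ℤ)) := hdist k _ _ (h1.trans h2.symm)
      _ < ε := hk
    obtain ⟨Lim, hLim⟩ := cauchySeq_tendsto_of_complete hcauchy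
    refine ⟨Lim, fun b hb hT => ?_⟩
    rw [Metric.tendsto_atTop]
    intro ε hε
    obtain ⟨k, hk⟩ := hsmall (ε / 2) (by linarith)
    obtain ⟨c, hc⟩ := hkey k
    have h1 := hc b hb hT
    have h2 := hc b₀ hb₀ hT₀
    have h3 := (Metric.tendsto_atTop.mp hLim) (ε / 2) (by linarith)
    obtain ⟨N₃, hN₃⟩ := h3
    obtain ⟨N₁, hN₁⟩ := eventually_atTop.mp h1
    obtain ⟨N₂, hN₂⟩ := eventually_atTop.mp h2
    refine ⟨max N₁ (max N₂ N₃), fun n hn => ?_⟩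
    have e1 := hN₁ n (by omega)
    have e2 := hN₂ n (by omega)
    have e3 := hN₃ n (by omega)
    calc dist ((towerSeq f a b n : ℤ_[p])) Lim
        ≤ dist ((towerSeq f a b n : ℤ_[p])) (u n) + dist (u n) Lim := dist_triangle _ _ _
      _ < ε / 2 + ε / 2 := by
          apply add_lt_add_of_le_of_lt _ e3
          calc dist ((towerSeq f a b n : ℤ_[p])) (u n)
              ≤ (p : ℝ) ^ (-(k : ℤ)) := hdist k _ _ (e1.trans e2.symm)
            _ ≤ ε / 2 := le_of_lt hk
      _ = ε := by ring
  · exact ⟨0, fun b hb hT => absurd ⟨b, hb, hT⟩ hex⟩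
end

section
/- Let f be a polynomial of one variable with integer coefficients such that f(n) is a positive integer for every positive integer n. For positive integers a and b, let g : ℕ⁺ → ℕ⁺ be g(n) = f^n(a), and consider the sequence n ↦ g^n(b). Suppose that for all positive integers a and b with g^n(b) → ∞ (in ℝ) as n → ∞, for every prime p the sequence (g^n(b))_n converges in ℤ_p and the limit does not depend on b (among those b for which the sequence diverges to ∞ in ℝ). Then for every prime number p, the reduction map f_p : ℤ/pℤ → ℤ/pℤ induced by f is not a cyclic permutation of length p. -/
/-!
If `f_p` were a `p`-cycle, `f` would have no integer fixed point, and positivity then forces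
`f(x) > x` for all large `x`; fix such an `a`. Then `g(m) = f^m(a)` satisfies `g(m) > m`, so every
orbit of `g` tends to infinity. Moreover `g(m) mod p = f_p^m(a mod p)` depends only on `m mod p`,
through a bijection `H` of `ℤ/pℤ`, so `g^n(b) ≡ H^n(b) (mod p)`. Orbits starting at `b ≢ b'` thus
never meet modulo `p`, whereas a common `p`-adic limit makes them congruent modulo `p` eventually.
-/

open Filter

open Function Polynomial Topology

theorem IsCyclicPermOfLength.minimalPeriod_eq {F : Type*} [Fintype F] {σ : F → F} {p : ℕ}
    (hσ : IsCyclicPermOfLength σ p) (hcard : Fintype.card F = p) (y : F) :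
    minimalPeriod σ y = p := by
  subst hcard
  obtain ⟨hbij, x, horb⟩ := hσ
  have hper := hbij.injective.mem_periodicPts
  have hx : minimalPeriod σ x = Fintype.card F := by
    refine le_antisymm minimalPeriod_le_card ?_
    have hsurj : Surjective fun i : Fin (minimalPeriod σ x) => σ^[i] x := fun z => by
      obtain ⟨i, -, rfl⟩ := horb z
      exact ⟨⟨i % _, Nat.mod_lt _ (minimalPeriod_pos_of_mem_periodicPts (hper x))⟩,
        iterate_mod_minimalPeriod_eq⟩
    simpa using Fintype.card_le_of_surjective _ hsurj
  obtain ⟨i, -, rfl⟩ := horb y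
  rw [minimalPeriod_apply_iterate (hper x), hx]

theorem semiconj_intCast_polyRed (f : ℤ[X]) (m : ℕ) :
    Semiconj (Int.cast : ℤ → ZMod m) (fun z => f.eval z) (polyRed f m) := fun z =>
  (eval₂_at_apply (p := f) (Int.castRingHom (ZMod m)) z).symm

theorem Polynomial.tendsto_eval_intCast_atTop {f : ℤ[X]} (hdeg : 0 < f.degree)
    (hlc : 0 < f.leadingCoeff) : Tendsto (fun n : ℤ => f.eval n) atTop atTop := by
  have hinj : Injective (Int.castRingHom ℝ) := Int.cast_injective
  have hreal := tendsto_atTop_of_leadingCoeff_nonneg (f.map (Int.castRingHom ℝ))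
    (by rwa [degree_map_eq_of_injective hinj])
    (by simpa [leadingCoeff_map_of_injective hinj] using hlc.le)
  have hint := hreal.comp (tendsto_intCast_atTop_atTop (R := ℝ))
  simp only [comp_def, eval_intCast_map, eq_intCast] at hint
  exact tendsto_intCast_atTop_iff.1 hint

theorem Polynomial.leadingCoeff_pos_of_eval_pos {f : ℤ[X]}
    (hpos : ∀ n : ℤ, 0 < n → 0 < f.eval n) : 0 < f.leadingCoeff := by
  rcases Nat.eq_zero_or_pos f.natDegree with hdeg | hdeg
  · have h1 := hpos 1 one_pos
    rwa [eq_C_of_natDegree_eq_zero hdeg, eval_C, ← leadingCoeff_C (f.coeff 0),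
      ← eq_C_of_natDegree_eq_zero hdeg] at h1
  have hf : f ≠ 0 := by rintro rfl; simp at hdeg
  by_contra! hlc
  have hneg : Tendsto (fun n : ℤ => (-f).eval n) atTop atTop :=
    tendsto_eval_intCast_atTop (by rwa [degree_neg, ← natDegree_pos_iff_degree_pos])
      (by rw [leadingCoeff_neg]; exact neg_pos.2 (hlc.lt_of_ne (leadingCoeff_ne_zero.2 hf)))
  obtain ⟨n, hn, hn0⟩ := ((hneg.eventually_ge_atTop 0).and (eventually_gt_atTop 0)).exists
  simp only [eval_neg, neg_nonneg] at hn
  exact (hpos n hn0).not_ge hn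

theorem Polynomial.exists_forall_lt_eval {f : ℤ[X]} (hpos : ∀ n : ℤ, 0 < n → 0 < f.eval n)
    (hne : ∀ x : ℤ, f.eval x ≠ x) : ∃ N : ℤ, ∀ x, N ≤ x → x < f.eval x := by
  rcases le_or_gt f.natDegree 1 with hdeg | hdeg
  · set c₁ := f.coeff 1
    set c₀ := f.coeff 0
    have heval : ∀ x, f.eval x = c₁ * x + c₀ := fun x => by
      rw [eq_X_add_C_of_natDegree_le_one hdeg]; simp [c₁, c₀]
    simp only [heval] at hpos hne ⊢
    have h1 := hpos 1 one_pos
    have hc₁ : 1 ≤ c₁ := by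
      by_contra! hc₁
      obtain hc₁ | hc₁ : c₁ < 0 ∨ c₁ = 0 := by omega
      · have := hpos (|c₀| + 1) (by positivity)
        nlinarith [le_abs_self c₀, neg_abs_le c₀]
      · exact hne c₀ (by rw [hc₁]; ring)
    have hne0 := hne 0
    refine ⟨|c₀| + 1, fun x hx => ?_⟩
    have hx0 : 0 ≤ x := by linarith [abs_nonneg c₀]
    obtain hc₀ | hc₁ : 0 < c₀ ∨ 2 ≤ c₁ := by omega
    · linarith [mul_le_mul_of_nonneg_right hc₁ hx0]
    · linarith [mul_le_mul_of_nonneg_right hc₁ hx0, neg_abs_le c₀]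
  · have hX : (X : ℤ[X]).degree < f.degree := by
      rw [degree_X, degree_eq_natDegree (by rintro rfl; simp at hdeg)]
      exact_mod_cast hdeg
    have hq := tendsto_eval_intCast_atTop (f := f - X)
      (by rw [degree_sub_eq_left_of_degree_lt hX]; exact lt_of_le_of_lt (by simp) hX)
      (by rw [leadingCoeff_sub_of_degree_lt hX]; exact leadingCoeff_pos_of_eval_pos hpos)
    obtain ⟨N, hN⟩ := eventually_atTop.1 (hq.eventually_gt_atTop 0)
    exact ⟨N, fun x hx => by simpa using hN x hx⟩

theorem add_le_iterate_of_lt_apply {φ : ℤ → ℤ} {N : ℤ} (hφ : ∀ x, N ≤ x → x < φ x) {a : ℤ}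
    (ha : N ≤ a) (m : ℕ) : a + m ≤ φ^[m] a := by
  induction m with
  | zero => simp
  | succ m ih =>
    rw [iterate_succ_apply']
    have := hφ _ (by omega : N ≤ φ^[m] a)
    push_cast; omega

theorem tendsto_iterate_atTop_of_lt_apply {g : ℕ → ℕ} (hg : ∀ m, m < g m) (b : ℕ) :
    Tendsto (fun n => g^[n] b) atTop atTop :=
  (strictMono_nat_of_lt_succ fun n => by
    show g^[n] b < g^[n + 1] b
    rw [iterate_succ_apply']; exact hg _).tendsto_atTop

theorem PadicInt.eventually_toZMod_eq {p : ℕ} [Fact p.Prime] {α : Type*} {l : Filter α}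
    {u : α → ℤ_[p]} {L : ℤ_[p]} (hu : Tendsto u l (𝓝 L)) :
    ∀ᶠ n in l, toZMod (u n) = toZMod L := by
  filter_upwards [hu.eventually (Metric.ball_mem_nhds L one_pos)] with n hn
  rwa [← sub_eq_zero, ← map_sub, ← RingHom.mem_ker, ker_toZMod, IsLocalRing.mem_maximalIdeal,
    mem_nonunits, ← dist_eq_norm]

theorem natCast_towerStep {f : ℤ[X]} {a m : ℕ} (p : ℕ)
    (hm : 0 ≤ (fun z => f.eval z)^[m] (a : ℤ)) :
    (towerStep f a m : ZMod p) = (polyRed f p)^[m] a := by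
  have h := (semiconj_intCast_polyRed f p).iterate_right m (a : ℤ)
  rwa [← Int.toNat_of_nonneg hm, Int.cast_natCast, Int.cast_natCast] at h

theorem eval_ne_self_of_isCyclicPermOfLength {f : ℤ[X]} {p : ℕ} [NeZero p] (hp : 1 < p)
    (hcyc : IsCyclicPermOfLength (polyRed f p) p) (x : ℤ) : f.eval x ≠ x := fun hx => by
  have hfix : IsFixedPt (polyRed f p) x :=
    (semiconj_intCast_polyRed f p x).symm.trans (congrArg _ hx)
  exact hp.ne ((minimalPeriod_eq_one_iff_isFixedPt.2 hfix).symm.trans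
    (hcyc.minimalPeriod_eq (ZMod.card p) x))

theorem exists_injective_semiconj_towerStep {f : ℤ[X]} {p : ℕ} [NeZero p]
    (hcyc : IsCyclicPermOfLength (polyRed f p) p) {a : ℕ}
    (ha : ∀ m, 0 ≤ (fun z => f.eval z)^[m] (a : ℤ)) :
    ∃ H : ZMod p → ZMod p, Injective H ∧ Semiconj (Nat.cast : ℕ → ZMod p) (towerStep f a) H := by
  set σ := polyRed f p
  have hper : ∀ y, minimalPeriod σ y = p := hcyc.minimalPeriod_eq (ZMod.card p)
  have hmod : ∀ m, σ^[m % p] a = σ^[m] a := fun m => by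
    simpa only [hper] using iterate_mod_minimalPeriod_eq (f := σ) (x := (a : ZMod p)) (n := m)
  refine ⟨fun z => σ^[z.val] a, fun z w hzw => ZMod.val_injective p ?_, fun m => ?_⟩
  · exact (iterate_eq_iterate_iff_of_lt_minimalPeriod (by rw [hper]; exact z.val_lt)
      (by rw [hper]; exact w.val_lt)).1 hzw
  · rw [natCast_towerStep p (ha m), ← hmod, ← ZMod.val_natCast]

theorem stmt_1 (f : Polynomial ℤ)
    (hpos : ∀ n : ℤ, 0 < n → 0 < f.eval n)
    (hconv : ∀ a : ℕ, 0 < a → ∀ (p : ℕ) [Fact p.Prime],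
      ∃ L : ℤ_[p], ∀ b : ℕ, 0 < b →
        Tendsto (fun n => (towerSeq f a b n : ℝ)) atTop atTop →
        Tendsto (fun n => (towerSeq f a b n : ℤ_[p])) atTop (nhds L)) :
    ∀ p : ℕ, p.Prime → ¬ IsCyclicPermOfLength (polyRed f p) p := by
  intro p hp hcyc
  have := Fact.mk hp
  obtain ⟨N, hN⟩ :=
    exists_forall_lt_eval hpos (eval_ne_self_of_isCyclicPermOfLength hp.one_lt hcyc)
  set a := (max N 1).toNat
  have hgrowth : ∀ m : ℕ, (a : ℤ) + m ≤ (fun z => f.eval z)^[m] a :=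
    add_le_iterate_of_lt_apply hN (by omega)
  obtain ⟨H, hH, hsemi⟩ :=
    exists_injective_semiconj_towerStep hcyc fun m => by linarith [hgrowth m]
  have hdiv : ∀ b, Tendsto (fun n => (towerSeq f a b n : ℝ)) atTop atTop := fun b =>
    tendsto_natCast_atTop_iff.2 <| tendsto_iterate_atTop_of_lt_apply
      (fun m => by have := hgrowth m; unfold towerStep; omega) b
  obtain ⟨L, hL⟩ := hconv a (by omega) p
  obtain ⟨n, hnp, hn1⟩ := ((PadicInt.eventually_toZMod_eq (hL p hp.pos (hdiv p))).and
    (PadicInt.eventually_toZMod_eq (hL 1 one_pos (hdiv 1)))).exists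
  have hcollide : H^[n] (p : ZMod p) = H^[n] (1 : ℕ) := by
    rw [← hsemi.iterate_right, ← hsemi.iterate_right, ← map_natCast PadicInt.toZMod,
      ← map_natCast PadicInt.toZMod]
    exact hnp.trans hn1.symm
  simpa using hH.iterate n hcollide
end

section
/- Let f be a tower-stable polynomial with integer coefficients, let a be a positive integer, and let b be an f-valid positive integer. Then there exists a sequence of positive integers (x_n)_{n≥1} such that for every n ≥ 1, b^n divides f^{x_n}(a) − x_n, and for every n ≥ 2 there exists an integer c_n with 0 ≤ c_n < b and x_n = c_n·b^{n−1} + x_{n−1}. -/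
/-- The period of a self-map: the least positive `L` with `σ^[K+L] = σ^[K]`
for some `K`. -/
noncomputable def mapPeriod {F : Type*} (σ : F → F) : ℕ :=
  sInf {L : ℕ | 0 < L ∧ ∃ K : ℕ, σ^[K + L] = σ^[K]}

/-- `λ_f(n)`: the period of the reduction of `f` modulo `n`. -/
noncomputable def polyLambda (f : Polynomial ℤ) (n : ℕ) : ℕ :=
  mapPeriod (polyRed f n)

/-- A polynomial `f ∈ ℤ[x]` is tower-stable if no reduction modulo a prime
`q` is a cyclic permutation of length `q`. -/
def PolyTowerStable (f : Polynomial ℤ) : Prop :=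
  ∀ q : ℕ, q.Prime → ¬ IsCyclicPermOfLength (polyRed f q) q

/-- `b` is valid if `p ∣ b` and `q ∣ p − 1` (`p`, `q` prime) imply `q ∣ b`. -/
def ValidNum (b : ℕ) : Prop :=
  ∀ p q : ℕ, p.Prime → q.Prime → p ∣ b → q ∣ p - 1 → q ∣ b

/-- `b` is `f`-valid if it is square-free, valid, and `p ∣ b`, `q ∣ λ_f(p)`
(`p`, `q` prime) imply `q ∣ b`. -/
def FValid (f : Polynomial ℤ) (b : ℕ) : Prop :=
  Squarefree b ∧ ValidNum b ∧
    ∀ p q : ℕ, p.Prime → q.Prime → p ∣ b → q ∣ polyLambda f p → q ∣ b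

/-!
For a prime `p ∣ b`, the orbit `y x = f^[x] a` is eventually periodic modulo `p`, with a cycle of
length `L < p` by tower-stability. If the multiplier `μ = (f^[L])'(y s)` of the cycle is a unit
mod `p`, of order `t ∣ p - 1`, then modulo `p ^ (n + 1)` the orbit has period `p ^ n * L * t` from
the same index on; if `μ ≡ 0`, the period stays `L`, but only from an index growing linearly in `n`.
Validity and `f`-validity make every prime factor of `L * t` a divisor of `b` smaller than `p`.

Treating the primes of `b` in increasing order, `y x ≡ x (mod b ^ N)` is solved by steps that are
multiples of the periods attached to the smaller primes. Once `b ^ N` is divisible by all the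
`L * t`, the period modulo `b ^ (n + 1)` divides `b ^ n`, so a solution modulo `b ^ n` lifts by
adding a digit `c * b ^ n`. In the superattracting case, a large solution `x` with `p ^ m ∣ y x - x`
automatically lies beyond the index needed at level `m`: otherwise `p ^ k` with `k ≈ x / L` would
divide the nonzero integer `(f^[L] - X)(x)`, which grows only polynomially in `x`.
-/

open Polynomial Filter

theorem exists_lt_mul_dvd_sub_mul {m u : ℕ} (hm : 0 < m) (hu : u.Coprime m) {M g : ℤ}
    (hg : M ∣ g) : ∃ j < m, M * m ∣ g - j * (M * u) := by
  have : NeZero m := ⟨hm.ne'⟩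
  obtain ⟨g', rfl⟩ := hg
  set j := ((g' : ZMod m) * (u : ZMod m)⁻¹).val
  have hj : (m : ℤ) ∣ g' - j * u := by
    rw [← ZMod.intCast_zmod_eq_zero_iff_dvd]
    push_cast
    rw [ZMod.natCast_zmod_val, mul_assoc, mul_comm _ (u : ZMod m), ZMod.coe_mul_inv_eq_one u hu]
    ring
  refine ⟨j, ZMod.val_lt _, ?_⟩
  rw [show M * g' - j * (M * u) = M * (g' - j * u) by ring]
  exact mul_dvd_mul_left M hj

theorem Int.pow_dvd_of_forall_primeFactors {b n : ℕ} (hb : Squarefree b) {z : ℤ}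
    (h : ∀ p ∈ b.primeFactors, (p : ℤ) ^ n ∣ z) : (b : ℤ) ^ n ∣ z := by
  rw [← Nat.prod_primeFactors_of_squarefree hb, Nat.cast_prod, ← Finset.prod_pow]
  refine Finset.prod_dvd_of_coprime (fun p hp q hq hpq => ?_) h
  exact (Nat.isCoprime_iff_coprime.2 <| (Nat.coprime_primes (Nat.prime_of_mem_primeFactors hp)
    (Nat.prime_of_mem_primeFactors hq)).2 hpq).pow

theorem exists_digit_sequence {b N x₀ : ℕ} (hb : 0 < b) {P : ℕ → ℕ → Prop}
    (h₀ : ∀ n ≤ N, P n x₀) (step : ∀ n ≥ N, ∀ x, P n x → ∃ c < b, P (n + 1) (c * b ^ n + x)) :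
    ∃ x : ℕ → ℕ, (∀ n, P n (x n)) ∧ ∀ n, ∃ c < b, x (n + 1) = c * b ^ n + x n := by
  have : ∀ n x, ∃ c < b, (n < N → c = 0) ∧ (N ≤ n → P n x → P (n + 1) (c * b ^ n + x)) := by
    intro n x
    by_cases h : N ≤ n ∧ P n x
    · obtain ⟨c, hcb, hc⟩ := step n h.1 x h.2
      exact ⟨c, hcb, fun hn => absurd h.1 (not_le.2 hn), fun _ _ => hc⟩
    · exact ⟨0, hb, fun _ => rfl, fun hn hx => absurd ⟨hn, hx⟩ h⟩
  choose c hcb hc₀ hc using this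
  let x : ℕ → ℕ := fun n => Nat.rec x₀ (fun n xn => c n xn * b ^ n + xn) n
  have hx_succ (n : ℕ) : x (n + 1) = c n (x n) * b ^ n + x n := rfl
  have hx_le : ∀ n ≤ N, x n = x₀ := by
    intro n hn
    induction n with
    | zero => rfl
    | succ n ih => rw [hx_succ, hc₀ n _ (by omega), zero_mul, zero_add, ih (by omega)]
  refine ⟨x, fun n => ?_, fun n => ⟨c n (x n), hcb _ _, hx_succ n⟩⟩
  rcases le_total n N with hn | hn
  · exact hx_le n hn ▸ h₀ n hn
  · induction n, hn using Nat.le_induction with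
    | base => exact hx_le N le_rfl ▸ h₀ N le_rfl
    | succ n hn ih => exact hx_succ n ▸ hc n _ hn ih

theorem dvd_apply_add_sub_of_dvd {y : ℕ → ℤ} {m : ℤ} {x P : ℕ} (hy : m ∣ y (x + P) - y x)
    (hG : m ∣ y x - x - P) :
    m ∣ y (x + P) - (x + P : ℕ) := by
  rw [show y (x + P) - ((x + P : ℕ) : ℤ) = (y (x + P) - y x) + (y x - x - P) by push_cast; ring]
  exact dvd_add hy hG

structure IsTowerPeriodic (y : ℕ → ℤ) (b p T : ℕ) (depth : ℕ → ℕ) (threshold : ℕ) : Prop where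
  period_pos : 0 < T
  depth_mono : Monotone depth
  prime_dvd_period : ∀ q, q.Prime → q ∣ T → q ∣ b ∧ q < p
  periodic : ∀ n, ∀ x ≥ depth n, ∀ j, (p : ℤ) ^ (n + 1) ∣ y (x + j * (p ^ n * T)) - y x
  depth_le : ∀ x ≥ threshold, ∀ m, (p : ℤ) ^ m ∣ y x - x → depth m ≤ x

namespace IsTowerPeriodic

variable {y : ℕ → ℤ} {b p T : ℕ} {depth : ℕ → ℕ} {threshold : ℕ}

theorem coprime_period (h : IsTowerPeriodic y b p T depth threshold) (hp : p.Prime) :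
    T.Coprime p :=
  (Nat.coprime_comm.1 <| (Nat.Prime.coprime_iff_not_dvd hp).2 fun hpT =>
    (h.prime_dvd_period p hp hpT).2.false)

theorem dvd_pow_period (h : IsTowerPeriodic y b p T depth threshold) (hb : b ≠ 0) :
    T ∣ b ^ T :=
  (Nat.dvd_pow_self_iff h.period_pos.ne' hb).2 fun q hq =>
    Nat.mem_primeFactors.2 ⟨(Nat.prime_of_mem_primeFactors hq),
      (h.prime_dvd_period q (Nat.prime_of_mem_primeFactors hq)
        (Nat.dvd_of_mem_primeFactors hq)).1, hb⟩

theorem pow_dvd_add_sub (h : IsTowerPeriodic y b p T depth threshold) {n x P : ℕ}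
    (hx : depth n ≤ x) (hP : p ^ n * T ∣ P) (hG : (p : ℤ) ^ n ∣ y x - x) :
    (p : ℤ) ^ n ∣ y (x + P) - (x + P : ℕ) := by
  obtain ⟨r, rfl⟩ := hP
  refine dvd_apply_add_sub_of_dvd ?_ (dvd_sub hG ?_)
  · simpa only [mul_comm r] using (pow_dvd_pow _ n.le_succ).trans (h.periodic n x hx r)
  · exact_mod_cast (dvd_mul_right _ _).mul_right _

theorem exists_pow_succ_dvd_add_sub (h : IsTowerPeriodic y b p T depth threshold)
    (hp : p.Prime) {M k x : ℕ} (hx : depth k ≤ x) (hM : M.Coprime p) (hG : (p : ℤ) ^ k ∣ y x - x) :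
    ∃ j, (p : ℤ) ^ (k + 1) ∣ y (x + j * M * (p ^ k * T)) - (x + j * M * (p ^ k * T) : ℕ) := by
  obtain ⟨j, -, hj⟩ :=
    exists_lt_mul_dvd_sub_mul hp.pos (Nat.Coprime.mul_left hM (h.coprime_period hp)) hG
  refine ⟨j, dvd_apply_add_sub_of_dvd (h.periodic k x hx (j * M)) ?_⟩
  rw [pow_succ]
  convert hj using 2
  push_cast
  ring

end IsTowerPeriodic

section Assembly

variable {y : ℕ → ℤ} {b : ℕ} {T threshold : ℕ → ℕ} {depth : ℕ → ℕ → ℕ}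

/-- Primes are treated in increasing order: the periods of the smaller primes are prime to the
larger ones, so a step that is a multiple of all of them can still adjust `x` modulo `p ^ (k+1)`. -/
theorem exists_ge_pow_dvd_sub (S : Finset ℕ) (hS : ∀ p ∈ S, p.Prime)
    (h : ∀ p ∈ S, IsTowerPeriodic y b p (T p) (depth p) (threshold p)) (n x₀ : ℕ) :
    ∃ x ≥ x₀, ∀ p ∈ S, (p : ℤ) ^ n ∣ y x - x := by
  induction S using Finset.induction_on_max generalizing x₀ with
  | empty => exact ⟨x₀, le_rfl, by simp⟩
  | insert p S hlt ih =>
    have hp := hS p (Finset.mem_insert_self p S)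
    have hpT := h p (Finset.mem_insert_self p S)
    have hS' : ∀ q ∈ S, q.Prime := fun q hq => hS q (Finset.mem_insert_of_mem hq)
    have h' : ∀ q ∈ S, IsTowerPeriodic y b q (T q) (depth q) (threshold q) :=
      fun q hq => h q (Finset.mem_insert_of_mem hq)
    obtain ⟨x₁, hx₁, hx₁S⟩ := ih hS' h' (x₀ + depth p n + ∑ q ∈ S, depth q n)
    set M := ∏ q ∈ S, q ^ n * T q
    have hM : M.Coprime p := Nat.Coprime.prod_left fun q hq => Nat.Coprime.mul_left
      (Nat.Coprime.pow_left _ <| (Nat.coprime_primes (hS' q hq) hp).2 (hlt q hq).ne)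
      (Nat.coprime_comm.1 <| (Nat.Prime.coprime_iff_not_dvd hp).2 fun hpq =>
        lt_asymm (hlt q hq) ((h' q hq).prime_dvd_period p hp hpq).2)
    have hdepth : ∀ q ∈ S, depth q n ≤ x₁ := fun q hq =>
      (Finset.single_le_sum (f := fun q => depth q n) (fun _ _ => Nat.zero_le _) hq).trans
        (by omega)
    have inner : ∀ k ≤ n, ∃ x ≥ x₁, (∀ q ∈ S, (q : ℤ) ^ n ∣ y x - x) ∧ (p : ℤ) ^ k ∣ y x - x := by
      intro k hk
      induction k with
      | zero => exact ⟨x₁, le_rfl, hx₁S, by simp⟩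
      | succ k ihk =>
        obtain ⟨x, hx, hxS, hxp⟩ := ihk (by omega)
        obtain ⟨j, hj⟩ := hpT.exists_pow_succ_dvd_add_sub hp
          ((hpT.depth_mono (by omega : k ≤ n)).trans (by omega)) hM hxp
        refine ⟨_, by omega, fun q hq => (h' q hq).pow_dvd_add_sub ((hdepth q hq).trans hx) ?_
          (hxS q hq), hj⟩
        exact ((Finset.dvd_prod_of_mem (fun q => q ^ n * T q) hq).mul_left j).mul_right _
    obtain ⟨x, hx, hxS, hxp⟩ := inner n le_rfl
    refine ⟨x, by omega, fun q hq => ?_⟩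
    rcases Finset.mem_insert.1 hq with rfl | hq
    · exact hxp
    · exact hxS q hq

theorem exists_lt_pow_succ_dvd_sub (hb : Squarefree b)
    (h : ∀ p ∈ b.primeFactors, IsTowerPeriodic y b p (T p) (depth p) (threshold p)) {n x : ℕ}
    (hT : ∀ p ∈ b.primeFactors, T p ∣ b ^ n) (hx : ∀ p ∈ b.primeFactors, threshold p ≤ x)
    (hG : (b : ℤ) ^ n ∣ y x - x) :
    ∃ c < b, (b : ℤ) ^ (n + 1) ∣ y (c * b ^ n + x) - (c * b ^ n + x : ℕ) := by
  obtain ⟨c, hcb, hc⟩ :=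
    exists_lt_mul_dvd_sub_mul (Nat.pos_of_ne_zero hb.ne_zero) (Nat.coprime_one_left b) hG
  refine ⟨c, hcb, add_comm x (c * b ^ n) ▸ dvd_apply_add_sub_of_dvd ?_ ?_⟩
  · refine Int.pow_dvd_of_forall_primeFactors hb fun p hp => ?_
    have hpdvd := Nat.dvd_of_mem_primeFactors hp
    obtain ⟨r, hr⟩ : p ^ n * T p ∣ b ^ n :=
      Nat.Coprime.mul_dvd_of_dvd_of_dvd
        (((h p hp).coprime_period (Nat.prime_of_mem_primeFactors hp)).pow_right n).symm
        (pow_dvd_pow_of_dvd hpdvd n) (hT p hp)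
    have hdepth := (h p hp).depth_le x (hx p hp) n
      ((pow_dvd_pow_of_dvd (by exact_mod_cast hpdvd) n).trans hG)
    have := (h p hp).periodic n x hdepth (c * r)
    rwa [show c * r * (p ^ n * T p) = c * b ^ n by rw [hr]; ring] at this
  · rw [pow_succ]
    convert hc using 2
    push_cast
    ring

theorem exists_digit_solutions (hb : Squarefree b)
    (h : ∀ p ∈ b.primeFactors, IsTowerPeriodic y b p (T p) (depth p) (threshold p)) :
    ∃ x : ℕ → ℕ, (∀ n, 0 < x n) ∧ (∀ n, (b : ℤ) ^ n ∣ y (x n) - x n) ∧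
      ∀ n, ∃ c < b, x (n + 1) = c * b ^ n + x n := by
  set N := ∑ p ∈ b.primeFactors, T p
  set X := 1 + ∑ p ∈ b.primeFactors, threshold p
  have hT : ∀ n ≥ N, ∀ p ∈ b.primeFactors, T p ∣ b ^ n := fun n hn p hp =>
    ((h p hp).dvd_pow_period hb.ne_zero).trans <| pow_dvd_pow b <|
      (Finset.single_le_sum (f := T) (fun _ _ => Nat.zero_le _) hp).trans hn
  have hX : ∀ x ≥ X, ∀ p ∈ b.primeFactors, threshold p ≤ x := fun x hx p hp =>
    (Finset.single_le_sum (f := threshold) (fun _ _ => Nat.zero_le _) hp).trans (by omega)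
  obtain ⟨x₀, hx₀, hx₀G⟩ :=
    exists_ge_pow_dvd_sub _ (fun p => Nat.prime_of_mem_primeFactors) h N X
  obtain ⟨x, hx, hdigit⟩ := exists_digit_sequence (P := fun n x => X ≤ x ∧ (b : ℤ) ^ n ∣ y x - x)
    (Nat.pos_of_ne_zero hb.ne_zero)
    (fun n hn => ⟨hx₀, (pow_dvd_pow _ hn).trans (Int.pow_dvd_of_forall_primeFactors hb hx₀G)⟩)
    fun n hn x hx => by
      obtain ⟨c, hcb, hc⟩ := exists_lt_pow_succ_dvd_sub hb h (hT n hn) (hX x hx.1) hx.2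
      exact ⟨c, hcb, hx.1.trans (Nat.le_add_left _ _), hc⟩
  exact ⟨x, fun n => by have := (hx n).1; omega, fun n => (hx n).2, hdigit⟩

end Assembly

namespace Polynomial

variable (g : ℤ[X])

theorem dvd_iterate_eval_sub {M u v : ℤ} (h : M ∣ u - v) (k : ℕ) :
    M ∣ (g.eval ·)^[k] u - (g.eval ·)^[k] v := by
  simpa [iterate_comp_eval] using h.trans (sub_dvd_eval_sub u v (g.comp^[k] X))

theorem dvd_iterate_eval_sub_self {m u : ℤ} (h : m ∣ g.eval u - u) (k : ℕ) :
    m ∣ (g.eval ·)^[k] u - u := by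
  induction k with
  | zero => simp
  | succ k ih =>
    rw [Function.iterate_succ_apply, ← sub_add_sub_cancel _ ((g.eval ·)^[k] u)]
    exact dvd_add (g.dvd_iterate_eval_sub h k) ih

theorem derivative_iterate_comp_eval_modEq {m u : ℤ} (h : m ∣ g.eval u - u) (k : ℕ) :
    (g.comp^[k] X).derivative.eval u ≡ g.derivative.eval u ^ k [ZMOD m] := by
  induction k with
  | zero => simp [Int.ModEq.refl]
  | succ k ih =>
    rw [Function.iterate_succ_apply', derivative_comp, eval_mul, eval_comp, iterate_comp_eval,
      eval_X, pow_succ]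
    exact ih.mul (Int.modEq_iff_dvd.2 <|
      (g.dvd_iterate_eval_sub_self h k).trans (sub_dvd_eval_sub _ _ _)).symm

theorem eval_iterate_comp_X (k : ℕ) : ((g.comp^[k] X).eval ·) = (g.eval ·)^[k] := by
  funext z
  rw [iterate_comp_eval, eval_X]

theorem mul_dvd_iterate_eval_sub {u M : ℤ} {m : ℕ} (hM : M ∣ g.eval u - u) (hmM : (m : ℤ) ∣ M)
    (hd : (m : ℤ) ∣ g.derivative.eval u - 1) : M * m ∣ (g.eval ·)^[m] u - u := by
  obtain ⟨A, hA⟩ := hM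
  obtain ⟨c, hc⟩ := hd
  obtain ⟨d, hd⟩ := hmM
  have key : ∀ j : ℕ, M * m ∣ (g.eval ·)^[j] u - (u + j * (g.eval u - u)) := by
    intro j
    induction j with
    | zero => simp
    | succ j ih =>
      obtain ⟨e, he⟩ := g.binomExpansion u (j * (g.eval u - u))
      have hstep : M * m ∣ g.eval (u + j * (g.eval u - u)) - (u + (j + 1) * (g.eval u - u)) :=
        ⟨c * j * A + e * j ^ 2 * d * A ^ 2, by
          rw [he]
          linear_combination (j * (g.eval u - u)) * hc + (m * c * j) * hA +
            (e * j ^ 2 * (g.eval u - u + M * A)) * hA + (e * j ^ 2 * M * A ^ 2) * hd⟩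
      rw [Function.iterate_succ_apply', Nat.cast_succ,
        ← sub_add_sub_cancel _ (g.eval (u + j * (g.eval u - u)))]
      exact dvd_add (ih.trans (sub_dvd_eval_sub _ _ g)) hstep
  have := dvd_add (key m) (show M * m ∣ m * (g.eval u - u) from ⟨A, by rw [hA]; ring⟩)
  rwa [← sub_sub, sub_add_cancel] at this

theorem pow_succ_dvd_iterate_pow_mul_sub {p t : ℕ} {u : ℤ} (hu : (p : ℤ) ∣ g.eval u - u)
    (ht : ((g.derivative.eval u : ℤ) : ZMod p) ^ t = 1) (n : ℕ) :
    (p : ℤ) ^ (n + 1) ∣ (g.eval ·)^[p ^ n * t] u - u := by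
  induction n with
  | zero => simpa using g.dvd_iterate_eval_sub_self hu t
  | succ n ih =>
    set H := g.comp^[p ^ n * t] X
    have hH : (H.eval ·) = (g.eval ·)^[p ^ n * t] := g.eval_iterate_comp_X _
    have hd : (p : ℤ) ∣ H.derivative.eval u - 1 := by
      have h1 : g.derivative.eval u ^ (p ^ n * t) ≡ 1 [ZMOD p] := by
        rw [← ZMod.intCast_eq_intCast_iff]
        push_cast
        rw [mul_comm, pow_mul, ht, one_pow]
      exact ((g.derivative_iterate_comp_eval_modEq hu _).trans h1).symm.dvd
    have := H.mul_dvd_iterate_eval_sub (by rwa [congrFun hH u]) (dvd_pow_self _ n.succ_ne_zero) hd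
    rwa [hH, ← Function.iterate_mul, ← pow_succ, show p ^ n * t * p = p ^ (n + 1) * t by ring]
      at this

theorem pow_succ_dvd_iterate_succ_sub {m u : ℤ} (hu : m ∣ g.eval u - u)
    (hd : m ∣ g.derivative.eval u) (k : ℕ) :
    m ^ (k + 1) ∣ (g.eval ·)^[k + 1] u - (g.eval ·)^[k] u := by
  induction k with
  | zero => simpa using hu
  | succ k ih =>
    rw [Function.iterate_succ_apply'] at ih
    rw [Function.iterate_succ_apply', Function.iterate_succ_apply']
    set w := (g.eval ·)^[k] u
    obtain ⟨e, he⟩ := g.binomExpansion w (g.eval w - w)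
    rw [add_sub_cancel] at he
    have hw : m ∣ g.derivative.eval w := by
      have := (g.dvd_iterate_eval_sub_self hu k).trans (sub_dvd_eval_sub _ _ g.derivative)
      simpa using dvd_add this hd
    have hsq : m ^ ((k + 1) + (k + 1)) ∣ (g.eval w - w) ^ 2 := by
      rw [pow_add, sq]
      exact mul_dvd_mul ih ih
    rw [he, add_assoc (g.eval w), add_sub_cancel_left]
    refine dvd_add (pow_succ' m (k + 1) ▸ mul_dvd_mul hw ih) ((Dvd.dvd.trans ?_ hsq).mul_left e)
    exact pow_dvd_pow m (by omega)

theorem eventually_abs_eval_lt_two_pow (Ψ : ℤ[X]) :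
    ∀ᶠ x : ℕ in atTop, |Ψ.eval (x : ℤ)| < 2 ^ x := by
  set P := Ψ.map (Int.castRingHom ℝ)
  have hdeg : P.degree ≤ (X ^ Ψ.natDegree : ℝ[X]).degree := by
    rw [degree_X_pow]
    exact degree_map_le.trans degree_le_natDegree
  have hO : (fun x : ℕ => P.eval (x : ℝ)) =O[atTop] fun x : ℕ => (x : ℝ) ^ Ψ.natDegree := by
    simpa [Function.comp_def] using
      (isBigO_atTop_of_degree_le P _ hdeg).comp_tendsto tendsto_natCast_atTop_atTop
  filter_upwards [(hO.trans_isLittleO (isLittleO_pow_const_const_pow_of_one_lt Ψ.natDegree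
    one_lt_two)).bound one_half_pos] with x hx
  have hcast : P.eval (x : ℝ) = ((Ψ.eval (x : ℤ) : ℤ) : ℝ) := by
    simp [P]
  simp only [hcast, Real.norm_eq_abs] at hx
  have : |((Ψ.eval (x : ℤ) : ℤ) : ℝ)| < 2 ^ x := by
    rw [abs_of_pos (by positivity : (0 : ℝ) < 2 ^ x)] at hx
    linarith [pow_pos (by norm_num : (0 : ℝ) < 2) x]
  exact_mod_cast this

theorem eventually_le_of_pow_dvd_eval {Φ : ℤ[X]} (hΦ : Φ ≠ 0) {p : ℕ} (hp : 2 ≤ p) (s L : ℕ) :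
    ∀ᶠ x : ℕ in atTop, ∀ k, (p : ℤ) ^ k ∣ Φ.eval (x : ℤ) → s + L * k ≤ x := by
  have hroot : ∀ᶠ x : ℕ in atTop, Φ.eval (x : ℤ) ≠ 0 := by
    rw [← Nat.cofinite_eq_atTop]
    exact Nat.cast_injective.tendsto_cofinite.eventually (eventually_cofinite_not_isRoot hΦ)
  filter_upwards [hroot, eventually_abs_eval_lt_two_pow (C (2 ^ s) * Φ ^ L)] with x hx hgrowth
  intro k hk
  by_contra! hlt
  have hpk : (2 : ℤ) ^ k ≤ |Φ.eval (x : ℤ)| :=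
    (pow_le_pow_left₀ (by norm_num) (by exact_mod_cast hp) k).trans
      (Int.le_of_dvd (abs_pos.2 hx) ((dvd_abs _ _).2 hk))
  have : (2 : ℤ) ^ x < 2 ^ x := calc
    (2 : ℤ) ^ x < 2 ^ (s + L * k) := pow_lt_pow_right₀ one_lt_two hlt
    _ = 2 ^ s * (2 ^ k) ^ L := by rw [pow_add, mul_comm L, pow_mul]
    _ ≤ 2 ^ s * |Φ.eval (x : ℤ)| ^ L := by gcongr
    _ = |(C (2 ^ s) * Φ ^ L).eval (x : ℤ)| := by simp [abs_mul, abs_pow]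
    _ < 2 ^ x := hgrowth
  exact lt_irrefl _ this

end Polynomial

theorem Finite.exists_add_eq {β : Type*} [Finite β] (u : ℕ → β) :
    ∃ K L, 0 < L ∧ u (K + L) = u K := by
  obtain ⟨i, j, hij, h⟩ := Finite.exists_ne_map_eq_of_infinite u
  rcases Nat.lt_or_gt_of_ne hij with hlt | hlt
  · exact ⟨i, j - i, by omega, by rw [Nat.add_sub_cancel' hlt.le]; exact h.symm⟩
  · exact ⟨j, i - j, by omega, by rw [Nat.add_sub_cancel' hlt.le]; exact h⟩

open Function in
theorem minimalPeriod_dvd_mapPeriod {α : Type*} [Finite α] (σ : α → α) {z : α}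
    (hz : z ∈ periodicPts σ) : minimalPeriod σ z ∣ mapPeriod σ := by
  have hne : {L : ℕ | 0 < L ∧ ∃ K : ℕ, σ^[K + L] = σ^[K]}.Nonempty := by
    obtain ⟨K, L, hL, h⟩ := Finite.exists_add_eq (fun n => σ^[n])
    exact ⟨L, hL, K, h⟩
  obtain ⟨-, K, hK⟩ := Nat.sInf_mem hne
  rw [← minimalPeriod_apply_iterate hz K]
  refine IsPeriodicPt.minimalPeriod_dvd ?_
  change σ^[mapPeriod σ] (σ^[K] z) = σ^[K] z
  rw [← iterate_add_apply, add_comm, mapPeriod, hK]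

open Function in
theorem isCyclicPermOfLength_of_minimalPeriod_eq_card {α : Type*} [Fintype α] {σ : α → α} {z : α}
    (h : minimalPeriod σ z = Fintype.card α) : IsCyclicPermOfLength σ (Fintype.card α) := by
  have hcover : ∀ w, ∃ i < Fintype.card α, σ^[i] z = w := by
    have hinj : Injective fun i : Fin (Fintype.card α) => σ^[i] z := fun i j hij =>
      Fin.ext <| iterate_injOn_Iio_minimalPeriod (by simp [h]) (by simp [h]) hij
    intro w
    obtain ⟨i, hi⟩ := ((Fintype.bijective_iff_injective_and_card _).2 ⟨hinj, by simp⟩).2 w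
    exact ⟨i, i.isLt, hi⟩
  refine ⟨Surjective.bijective_of_finite fun w => ?_, z, hcover⟩
  obtain ⟨i, -, rfl⟩ := hcover w
  have hpos : 0 < Fintype.card α := Fintype.card_pos_iff.2 ⟨z⟩
  refine ⟨σ^[i + Fintype.card α - 1] z, ?_⟩
  rw [← iterate_succ_apply' σ, Nat.succ_eq_add_one, Nat.sub_add_cancel (by omega),
    iterate_add_apply, ← h, isPeriodicPt_minimalPeriod]

section Orbit

variable {f : ℤ[X]} {a : ℤ}

theorem dvd_iterate_add_mul_sub {M : ℤ} {s P : ℕ}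
    (h : M ∣ (f.eval ·)^[s + P] a - (f.eval ·)^[s] a) :
    ∀ x ≥ s, ∀ j, M ∣ (f.eval ·)^[x + j * P] a - (f.eval ·)^[x] a := by
  intro x hx j
  induction j with
  | zero => simp
  | succ j ih =>
    have hstep : M ∣ (f.eval ·)^[x + (j + 1) * P] a - (f.eval ·)^[x + j * P] a := by
      have := f.dvd_iterate_eval_sub h (x - s + j * P)
      rwa [← Function.iterate_add_apply, ← Function.iterate_add_apply,
        show x - s + j * P + (s + P) = x + (j + 1) * P by rw [add_mul]; omega,
        show x - s + j * P + s = x + j * P by omega] at this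
    simpa using dvd_add hstep ih

theorem iterate_eval_iterate_comp_X (L k x : ℕ) :
    ((f.comp^[L] X).eval ·)^[k] ((f.eval ·)^[x] a) = (f.eval ·)^[x + L * k] a := by
  rw [eval_iterate_comp_X, ← Function.iterate_mul, ← Function.iterate_add_apply, add_comm]

theorem eval_iterate_comp_X_iterate (L x : ℕ) :
    (f.comp^[L] X).eval ((f.eval ·)^[x] a) = (f.eval ·)^[x + L] a := by
  simpa using iterate_eval_iterate_comp_X (f := f) (a := a) L 1 x

theorem polyRed_iterate_intCast (m k : ℕ) (z : ℤ) :
    (polyRed f m)^[k] (z : ZMod m) = (((f.eval ·)^[k] z : ℤ) : ZMod m) := by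
  have hsemi : Function.Semiconj (Int.cast : ℤ → ZMod m) (f.eval ·) (polyRed f m) := fun z => by
    simp [polyRed, eval₂_at_intCast]
  exact ((hsemi.iterate_right k) z).symm

end Orbit

open Function in
theorem exists_period_mod_prime {f : ℤ[X]} (hts : PolyTowerStable f) (a : ℤ) {p : ℕ}
    (hp : p.Prime) :
    ∃ s L, 0 < L ∧ L < p ∧ L ∣ polyLambda f p ∧
      (p : ℤ) ∣ (f.eval ·)^[s + L] a - (f.eval ·)^[s] a := by
  have : Fact p.Prime := ⟨hp⟩
  set σ := polyRed f p
  obtain ⟨s, L₀, hL₀, hs⟩ := Finite.exists_add_eq fun n => σ^[n] (a : ZMod p)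
  have hz : σ^[s] a ∈ periodicPts σ :=
    mk_mem_periodicPts hL₀ <| by
      rw [IsPeriodicPt, IsFixedPt, ← iterate_add_apply, add_comm]
      exact hs
  refine ⟨s, minimalPeriod σ (σ^[s] a), minimalPeriod_pos_of_mem_periodicPts hz,
    lt_of_le_of_ne (minimalPeriod_le_card.trans_eq (ZMod.card p)) fun hL => hts p hp ?_,
    minimalPeriod_dvd_mapPeriod σ hz, ?_⟩
  · have := isCyclicPermOfLength_of_minimalPeriod_eq_card (hL.trans (ZMod.card p).symm)
    rwa [ZMod.card] at this
  · rw [← ZMod.intCast_eq_intCast_iff_dvd_sub, ← polyRed_iterate_intCast, ← polyRed_iterate_intCast,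
      add_comm, iterate_add_apply, isPeriodicPt_minimalPeriod]

section Multiplier

variable {f : ℤ[X]} {a : ℤ} {b p s L : ℕ}

theorem isTowerPeriodic_of_multiplier_ne_zero (hb : ValidNum b) (hp : p.Prime) (hpb : p ∣ b)
    (hL : 0 < L) (hLb : ∀ q, q.Prime → q ∣ L → q ∣ b ∧ q < p)
    (hper : (p : ℤ) ∣ (f.eval ·)^[s + L] a - (f.eval ·)^[s] a)
    (hμ : (((f.comp^[L] X).derivative.eval ((f.eval ·)^[s] a) : ℤ) : ZMod p) ≠ 0) :
    IsTowerPeriodic (fun x => (f.eval ·)^[x] a) b p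
      (L * orderOf (((f.comp^[L] X).derivative.eval ((f.eval ·)^[s] a) : ℤ) : ZMod p))
      (fun _ => s) s := by
  have : Fact p.Prime := ⟨hp⟩
  set t := orderOf (((f.comp^[L] X).derivative.eval ((f.eval ·)^[s] a) : ℤ) : ZMod p)
  have htp : t ∣ p - 1 := ZMod.orderOf_dvd_card_sub_one hμ
  have htpos : 0 < t := Nat.pos_of_ne_zero fun h0 => by
    rw [h0, zero_dvd_iff] at htp
    have := hp.two_le
    omega
  have htlt : t < p := by
    have := Nat.le_of_dvd (by have := hp.two_le; omega) htp
    have := hp.two_le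
    omega
  have ht : (((f.comp^[L] X).derivative.eval ((f.eval ·)^[s] a) : ℤ) : ZMod p) ^ t = 1 :=
    pow_orderOf_eq_one _
  refine ⟨Nat.mul_pos hL htpos, monotone_const, fun q hq hqd => ?_, fun n x hx j => ?_,
    fun x hx _ _ => hx⟩
  · rcases hq.dvd_mul.1 hqd with hqL | hqt
    · exact hLb q hq hqL
    · exact ⟨hb p q hp hq hpb (hqt.trans htp), (Nat.le_of_dvd htpos hqt).trans_lt htlt⟩
  · have h := (f.comp^[L] X).pow_succ_dvd_iterate_pow_mul_sub
      (by rwa [eval_iterate_comp_X_iterate]) ht n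
    rw [iterate_eval_iterate_comp_X] at h
    simpa only [show L * (p ^ n * t) = p ^ n * (L * t) by ring] using
      dvd_iterate_add_mul_sub h x hx j

theorem exists_isTowerPeriodic_of_multiplier_eq_zero (hp : p.Prime) (hL : 0 < L)
    (hLb : ∀ q, q.Prime → q ∣ L → q ∣ b ∧ q < p)
    (hper : (p : ℤ) ∣ (f.eval ·)^[s + L] a - (f.eval ·)^[s] a)
    (hμ : (((f.comp^[L] X).derivative.eval ((f.eval ·)^[s] a) : ℤ) : ZMod p) = 0) :
    ∃ threshold, IsTowerPeriodic (fun x => (f.eval ·)^[x] a) b p L (fun n => s + L * n)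
      threshold := by
  have hd : (p : ℤ) ∣ (f.comp^[L] X).derivative.eval ((f.eval ·)^[s] a) :=
    (ZMod.intCast_zmod_eq_zero_iff_dvd _ p).1 hμ
  have hB : ∀ k, ∀ x ≥ s + L * k, ∀ j,
      (p : ℤ) ^ (k + 1) ∣ (f.eval ·)^[x + j * L] a - (f.eval ·)^[x] a := fun k => by
    have := (f.comp^[L] X).pow_succ_dvd_iterate_succ_sub (by rwa [eval_iterate_comp_X_iterate]) hd k
    rw [iterate_eval_iterate_comp_X, iterate_eval_iterate_comp_X,
      show s + L * (k + 1) = s + L * k + L by ring] at this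
    exact dvd_iterate_add_mul_sub this
  have hΦ : f.comp^[L] X - X ≠ 0 := fun h => by
    rw [sub_eq_zero.1 h, derivative_X, eval_one] at hd
    exact hp.not_dvd_one (by exact_mod_cast hd)
  obtain ⟨X₀, hX₀⟩ := eventually_atTop.1 (eventually_le_of_pow_dvd_eval hΦ hp.two_le s L)
  refine ⟨max s X₀, hL, fun m n hmn => Nat.add_le_add_left (Nat.mul_le_mul_left L hmn) s, hLb,
    fun n x hx j => ?_, fun x hx m hm => ?_⟩
  · simpa only [← mul_assoc] using hB n x hx (j * p ^ n)
  · by_contra! hlt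
    have hsx : s ≤ x := (le_max_left _ _).trans hx
    have hk := Nat.mul_div_le (x - s) L
    have hxk := Nat.lt_mul_div_succ (x - s) hL
    generalize (x - s) / L = k at hk hxk
    rw [mul_add, mul_one] at hxk
    have hkm : k + 1 ≤ m := Nat.lt_of_mul_lt_mul_left (a := L) (by omega)
    have hΦy : (p : ℤ) ^ (k + 1) ∣ (f.comp^[L] X - X).eval ((f.eval ·)^[x] a) := by
      rw [eval_sub, eval_X, eval_iterate_comp_X_iterate]
      simpa using hB k x (by omega) 1
    have hΦx : (p : ℤ) ^ (k + 1) ∣ (f.comp^[L] X - X).eval (x : ℤ) := by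
      have := ((pow_dvd_pow _ hkm).trans hm).trans (sub_dvd_eval_sub _ _ (f.comp^[L] X - X))
      simpa using dvd_sub hΦy this
    have := hX₀ x ((le_max_right _ _).trans hx) (k + 1) hΦx
    rw [mul_add, mul_one] at this
    omega

end Multiplier

theorem exists_isTowerPeriodic_orbit {f : ℤ[X]} (hts : PolyTowerStable f) (a : ℤ) {b p : ℕ}
    (hfb : FValid f b) (hp : p ∈ b.primeFactors) :
    ∃ T depth threshold, IsTowerPeriodic (fun x => (f.eval ·)^[x] a) b p T depth threshold := by
  have hpp := Nat.prime_of_mem_primeFactors hp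
  have hpb := Nat.dvd_of_mem_primeFactors hp
  obtain ⟨s, L, hL, hLp, hLdvd, hper⟩ := exists_period_mod_prime hts a hpp
  have hLb : ∀ q, q.Prime → q ∣ L → q ∣ b ∧ q < p := fun q hq hqL =>
    ⟨hfb.2.2 p q hpp hq hpb (hqL.trans hLdvd), (Nat.le_of_dvd hL hqL).trans_lt hLp⟩
  by_cases hμ : (((f.comp^[L] X).derivative.eval ((f.eval ·)^[s] a) : ℤ) : ZMod p) = 0
  · obtain ⟨threshold, h⟩ := exists_isTowerPeriodic_of_multiplier_eq_zero hpp hL hLb hper hμ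
    exact ⟨_, _, _, h⟩
  · exact ⟨_, _, _, isTowerPeriodic_of_multiplier_ne_zero hfb.2.1 hpp hpb hL hLb hper hμ⟩

theorem stmt_2_general (f : Polynomial ℤ) (hts : PolyTowerStable f)
    (a : ℕ) (b : ℕ) (hfb : FValid f b) :
    ∃ x : ℕ → ℕ,
      (∀ n : ℕ, 1 ≤ n → 0 < x n) ∧
      (∀ n : ℕ, 1 ≤ n →
        (b : ℤ) ^ n ∣ (fun z => f.eval z)^[x n] (a : ℤ) - (x n : ℤ)) ∧
      (∀ n : ℕ, 2 ≤ n → ∃ c : ℕ, c < b ∧ x n = c * b ^ (n - 1) + x (n - 1)) := by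
  choose! T depth threshold h using fun p (hp : p ∈ b.primeFactors) =>
    exists_isTowerPeriodic_orbit hts (a : ℤ) hfb hp
  obtain ⟨x, hpos, hdvd, hdigit⟩ := exists_digit_solutions hfb.1 h
  refine ⟨x, fun n _ => hpos n, fun n _ => hdvd n, fun n hn => ?_⟩
  obtain ⟨c, hcb, hc⟩ := hdigit (n - 1)
  exact ⟨c, hcb, by rwa [Nat.sub_add_cancel (by omega)] at hc⟩

theorem stmt_2 (f : Polynomial ℤ) (hts : PolyTowerStable f)
    (a : ℕ) (ha : 0 < a) (b : ℕ) (hb : 0 < b) (hfb : FValid f b) :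
    ∃ x : ℕ → ℕ,
      (∀ n : ℕ, 1 ≤ n → 0 < x n) ∧
      (∀ n : ℕ, 1 ≤ n →
        (b : ℤ) ^ n ∣ (fun z => f.eval z)^[x n] (a : ℤ) - (x n : ℤ)) ∧
      (∀ n : ℕ, 2 ≤ n → ∃ c : ℕ, c < b ∧ x n = c * b ^ (n - 1) + x (n - 1)) :=
  stmt_2_general f hts a b hfb
end

section
/- Let F be a finite nonempty set of cardinality n and σ : F → F a map. For each a ∈ F, let (k_a, l_a) be the tail length and cycle length of σ at a, and set K = max_{a∈F} k_a and L = lcm_{a∈F} l_a. Then K + α(L) ≤ n, where α(L) is the largest prime power dividing L (with α(1) = 1). -/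
/-! Points of the tail of some `a` (before its forward orbit reaches a cycle) are not periodic,
while the whole cycle of some `b` consists of periodic points; so the longest tail and any cycle
together fit into `F`. A prime power dividing `L = lcm l_b` already divides a single `l_b`, hence
`K + α(L) ≤ K + l_b ≤ n`. -/

/-- The tail length of `σ` at `a`: the least `k` admitting some positive `l`
with `σ^[k+l] a = σ^[k] a`. -/
noncomputable def tailLength {F : Type*} (σ : F → F) (a : F) : ℕ :=
  sInf {k : ℕ | ∃ l : ℕ, 0 < l ∧ σ^[k + l] a = σ^[k] a}

/-- The cycle length of `σ` at `a`: the least positive `l` admitting some `k`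
with `σ^[k+l] a = σ^[k] a`. -/
noncomputable def cycleLength {F : Type*} (σ : F → F) (a : F) : ℕ :=
  sInf {l : ℕ | 0 < l ∧ ∃ k : ℕ, σ^[k + l] a = σ^[k] a}

/-- `alpha n` is the largest prime power dividing `n`, with `alpha 1 = 1`. -/
noncomputable def alpha (n : ℕ) : ℕ :=
  sSup {m : ℕ | (m = 1 ∨ IsPrimePow m) ∧ m ∣ n}

open Function Set

section TailAndCycle

variable {F : Type*} (σ : F → F) (a : F)

theorem iterate_add_eq_iterate_iff_isPeriodicPt {k l : ℕ} :
    σ^[k + l] a = σ^[k] a ↔ IsPeriodicPt σ l (σ^[k] a) := by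
  rw [add_comm, iterate_add_apply]
  rfl

variable {σ a} in
theorem iterate_mem_periodicPts_of_iterate_eq {i j : ℕ} (hij : i < j) (h : σ^[i] a = σ^[j] a) :
    σ^[i] a ∈ periodicPts σ := by
  refine ⟨j - i, Nat.sub_pos_of_lt hij, ?_⟩
  rw [← iterate_add_eq_iterate_iff_isPeriodicPt, Nat.add_sub_cancel' hij.le, h]

theorem exists_iterate_mem_periodicPts [Finite F] : ∃ k, σ^[k] a ∈ periodicPts σ := by
  obtain ⟨i, j, hne, h⟩ := Finite.exists_ne_map_eq_of_infinite (fun n : ℕ => σ^[n] a)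
  rcases hne.lt_or_gt with hlt | hlt
  · exact ⟨i, iterate_mem_periodicPts_of_iterate_eq hlt h⟩
  · exact ⟨j, iterate_mem_periodicPts_of_iterate_eq hlt h.symm⟩

theorem iterate_notMem_periodicPts_of_lt_tailLength {i : ℕ} (hi : i < tailLength σ a) :
    σ^[i] a ∉ periodicPts σ := by
  rintro ⟨l, hl, hper⟩
  have : tailLength σ a ≤ i :=
    Nat.sInf_le ⟨l, hl, (iterate_add_eq_iterate_iff_isPeriodicPt σ a).2 hper⟩
  omega

theorem injOn_iterate_Iio_tailLength : (Iio (tailLength σ a)).InjOn (σ^[·] a) := by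
  intro i hi j hj h
  by_contra hne
  rcases Ne.lt_or_gt hne with hlt | hlt
  · exact iterate_notMem_periodicPts_of_lt_tailLength σ a hi
      (iterate_mem_periodicPts_of_iterate_eq hlt h)
  · exact iterate_notMem_periodicPts_of_lt_tailLength σ a hj
      (iterate_mem_periodicPts_of_iterate_eq hlt h.symm)

theorem tailLength_le_ncard_compl_periodicPts [Finite F] :
    tailLength σ a ≤ (periodicPts σ)ᶜ.ncard := by
  calc tailLength σ a = ((σ^[·] a) '' Iio (tailLength σ a)).ncard := by
        rw [(injOn_iterate_Iio_tailLength σ a).ncard_image, Set.ncard_Iio_nat]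
    _ ≤ (periodicPts σ)ᶜ.ncard := by
        refine Set.ncard_le_ncard ?_
        rintro _ ⟨i, hi, rfl⟩
        exact iterate_notMem_periodicPts_of_lt_tailLength σ a hi

variable {σ a} in
theorem cycleLength_le_minimalPeriod {k : ℕ} (hk : σ^[k] a ∈ periodicPts σ) :
    cycleLength σ a ≤ minimalPeriod σ (σ^[k] a) :=
  Nat.sInf_le ⟨minimalPeriod_pos_of_mem_periodicPts hk, k,
    (iterate_add_eq_iterate_iff_isPeriodicPt σ a).2 (isPeriodicPt_minimalPeriod σ _)⟩

theorem cycleLength_pos [Finite F] : 0 < cycleLength σ a := by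
  obtain ⟨k, hk⟩ := exists_iterate_mem_periodicPts σ a
  exact (Nat.sInf_mem (s := {l : ℕ | 0 < l ∧ ∃ k : ℕ, σ^[k + l] a = σ^[k] a})
    ⟨_, minimalPeriod_pos_of_mem_periodicPts hk, k,
      (iterate_add_eq_iterate_iff_isPeriodicPt σ a).2 (isPeriodicPt_minimalPeriod σ _)⟩).1

variable {a} in
theorem minimalPeriod_le_ncard_periodicPts [Finite F] (ha : a ∈ periodicPts σ) :
    minimalPeriod σ a ≤ (periodicPts σ).ncard := by
  calc minimalPeriod σ a = ((σ^[·] a) '' Iio (minimalPeriod σ a)).ncard := by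
        rw [iterate_injOn_Iio_minimalPeriod.ncard_image, Set.ncard_Iio_nat]
    _ ≤ (periodicPts σ).ncard := by
        refine Set.ncard_le_ncard ?_
        rintro _ ⟨i, -, rfl⟩
        exact (bijOn_periodicPts (f := σ)).mapsTo.iterate i ha

theorem cycleLength_le_ncard_periodicPts [Finite F] :
    cycleLength σ a ≤ (periodicPts σ).ncard := by
  obtain ⟨k, hk⟩ := exists_iterate_mem_periodicPts σ a
  exact (cycleLength_le_minimalPeriod hk).trans (minimalPeriod_le_ncard_periodicPts σ hk)

theorem tailLength_add_cycleLength_le_card [Finite F] (b : F) :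
    tailLength σ a + cycleLength σ b ≤ Nat.card F := by
  rw [← Set.ncard_compl_add_ncard (periodicPts σ)]
  exact add_le_add (tailLength_le_ncard_compl_periodicPts σ a)
    (cycleLength_le_ncard_periodicPts σ b)

end TailAndCycle

theorem Finset.exists_dvd_of_isPrimePow_dvd_lcm {ι : Type*} {s : Finset ι}
    (hs : s.Nonempty) {f : ι → ℕ} {q : ℕ} (hq : IsPrimePow q) (h : q ∣ s.lcm f) :
    ∃ i ∈ s, q ∣ f i := by
  by_cases h0 : ∃ i ∈ s, f i = 0
  · obtain ⟨i, hi, hfi⟩ := h0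
    exact ⟨i, hi, hfi ▸ dvd_zero q⟩
  · have hf : ∀ i ∈ s, f i ≠ 0 := fun i hi hfi ↦ h0 ⟨i, hi, hfi⟩
    obtain ⟨p, e, hp, -, rfl⟩ := (isPrimePow_nat_iff q).1 hq
    obtain ⟨i, hi, hsup⟩ := s.exists_mem_eq_sup hs fun i ↦ (f i).factorization p
    refine ⟨i, hi, (hp.pow_dvd_iff_le_factorization (hf i hi)).2 ?_⟩
    rw [← hsup, ← Finset.factorization_lcm hf]
    exact (hp.pow_dvd_iff_le_factorization (Finset.lcm_ne_zero_iff.2 hf)).1 h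

theorem alpha_spec {n : ℕ} (hn : n ≠ 0) :
    (alpha n = 1 ∨ IsPrimePow (alpha n)) ∧ alpha n ∣ n :=
  Nat.sSup_mem (s := {m : ℕ | (m = 1 ∨ IsPrimePow m) ∧ m ∣ n})
    ⟨1, Or.inl rfl, one_dvd n⟩
    ⟨n, fun _ hm ↦ Nat.le_of_dvd (Nat.pos_of_ne_zero hn) hm.2⟩

theorem Finset.exists_alpha_lcm_dvd {ι : Type*} {s : Finset ι} (hs : s.Nonempty) {f : ι → ℕ}
    (hf : ∀ i ∈ s, f i ≠ 0) : ∃ i ∈ s, alpha (s.lcm f) ∣ f i := by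
  obtain ⟨h1 | hpp, hdvd⟩ := alpha_spec (Finset.lcm_ne_zero_iff.2 hf)
  · obtain ⟨i, hi⟩ := hs
    exact ⟨i, hi, h1 ▸ one_dvd _⟩
  · exact s.exists_dvd_of_isPrimePow_dvd_lcm hs hpp hdvd

/-- `K + α(L) ≤ card F` where `K` is the preperiod length and
`L` the period of `σ`. -/
theorem stmt_6 {F : Type*} [Fintype F] [Nonempty F] (σ : F → F) :
    Finset.univ.sup (tailLength σ) + alpha (Finset.univ.lcm (cycleLength σ)) ≤
      Fintype.card F := by
  obtain ⟨a, -, ha⟩ := Finset.exists_mem_eq_sup Finset.univ Finset.univ_nonempty (tailLength σ)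
  obtain ⟨b, -, hb⟩ := Finset.exists_alpha_lcm_dvd Finset.univ_nonempty
    fun b _ ↦ (cycleLength_pos σ b).ne'
  calc Finset.univ.sup (tailLength σ) + alpha (Finset.univ.lcm (cycleLength σ))
      ≤ tailLength σ a + cycleLength σ b :=
        ha ▸ Nat.add_le_add_left (Nat.le_of_dvd (cycleLength_pos σ b) hb) _
    _ ≤ Nat.card F := tailLength_add_cycleLength_le_card σ a b
    _ = Fintype.card F := Nat.card_eq_fintype_card
end

section
/- Let f : ℤ → ℤ be a map, P a period map of f, and let k, m, n be positive integers with m = P^k(n) = P^{k+1}(n). Then f induces a reduction map f_m : ℤ/mℤ → ℤ/mℤ; let K be the preperiod length and L the period of f_m. Then for all integers s, t and all positive integers u, v, if m ∣ (s − t), u ≥ k + K, v ≥ k + K, and L ∣ (u − v), then n ∣ (f^u(s) − f^v(t)). -/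
/-- `P : ℕ⁺ → ℕ⁺` (modelled on `ℕ`) is a period map of `f : ℤ → ℤ` if
`P(n) ∣ (s − t)` implies `n ∣ (f(s) − f(t))`. -/
def IsPeriodMap (f : ℤ → ℤ) (P : ℕ → ℕ) : Prop :=
  (∀ n : ℕ, 0 < n → 0 < P n) ∧
    ∀ (s t : ℤ) (n : ℕ), 0 < n → (P n : ℤ) ∣ s - t → (n : ℤ) ∣ f s - f t

/-- The reduction `f_m : ℤ/mℤ → ℤ/mℤ` of a map `f : ℤ → ℤ` (well defined as the
induced map whenever `f` preserves congruences modulo `m`). -/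
def intReduction (f : ℤ → ℤ) (m : ℕ) : ZMod m → ZMod m :=
  fun x => ((f (x.val : ℤ) : ℤ) : ZMod m)

/-- The preperiod length of a self-map: the least `K` with `σ^[K+L] = σ^[K]`
for some positive `L`. -/
noncomputable def mapPreperiod {F : Type*} (σ : F → F) : ℕ :=
  sInf {K : ℕ | ∃ L : ℕ, 0 < L ∧ σ^[K + L] = σ^[K]}

/-- Auxiliary: stabilization of an eventual period. -/
lemma stmt8_stab {F : Type*} (σ : F → F) {x p : ℕ} (h : σ^[x + p] = σ^[x]) :
    ∀ y, x ≤ y → ∀ c, σ^[y + c * p] = σ^[y] := by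
  intro y hy c
  induction c with
  | zero => simp
  | succ c ih =>
    have h1 : σ^[y + p] = σ^[y] := by
      have : y + p = (y - x) + (x + p) := by omega
      rw [this, Function.iterate_add, h, ← Function.iterate_add,
        Nat.sub_add_cancel hy]
    calc σ^[y + (c+1) * p] = σ^[(c * p) + (y + p)] := by ring_nf
    _ = σ^[c*p] ∘ σ^[y+p] := Function.iterate_add σ _ _
    _ = σ^[c*p] ∘ σ^[y] := by rw [h1]
    _ = σ^[y + c * p] := by rw [← Function.iterate_add]; ring_nf
    _ = σ^[y] := ih

/-- Auxiliary: asymmetric form of the eventual-periodicity comparison. -/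
lemma stmt8_per_aux {F : Type*} (σ : F → F) {K₀ K₁ L₀ L₁ a b : ℕ}
    (hK₀ : σ^[K₀ + L₁] = σ^[K₀]) (hK₁ : σ^[K₁ + L₀] = σ^[K₁]) (hL₁ : 0 < L₁)
    (ha : K₀ ≤ a) (hb : K₀ ≤ b) (hba : b ≤ a) (hd : ∃ d : ℕ, a = b + d * L₀) :
    σ^[a] = σ^[b] := by
  obtain ⟨d, hd⟩ := hd
  have hc : K₁ ≤ b + K₁ * L₁ := by nlinarith
  calc σ^[a] = σ^[a + K₁ * L₁] := (stmt8_stab σ hK₀ a ha K₁).symm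
  _ = σ^[(b + K₁ * L₁) + d * L₀] := by rw [hd]; ring_nf
  _ = σ^[b + K₁ * L₁] := stmt8_stab σ hK₁ _ hc d
  _ = σ^[b] := stmt8_stab σ hK₀ b hb K₁

/-- Auxiliary: iterates of a self-map of a finite type above the preperiod that
differ by a multiple of the period coincide. -/
lemma stmt8_per {F : Type*} [Finite F] (σ : F → F) {a b : ℕ}
    (ha : mapPreperiod σ ≤ a) (hb : mapPreperiod σ ≤ b)
    (hab : ((mapPeriod σ : ℤ)) ∣ (a : ℤ) - b) : σ^[a] = σ^[b] := by
  have hne : ∃ K L : ℕ, 0 < L ∧ σ^[K + L] = σ^[K] := by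
    obtain ⟨x, y, hxy, he⟩ := Finite.exists_ne_map_eq_of_infinite (fun i : ℕ => σ^[i])
    rcases Nat.lt_or_ge x y with h | h
    · exact ⟨x, y - x, by omega, by rw [Nat.add_sub_cancel' h.le]; exact he.symm⟩
    · exact ⟨y, x - y, by omega, by rw [Nat.add_sub_cancel' h]; exact he⟩
  obtain ⟨K', L', hL', hKL'⟩ := hne
  have hpre : ∃ L : ℕ, 0 < L ∧ σ^[mapPreperiod σ + L] = σ^[mapPreperiod σ] := by
    have h := Nat.sInf_mem (s := {K : ℕ | ∃ L : ℕ, 0 < L ∧ σ^[K + L] = σ^[K]})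
      ⟨K', L', hL', hKL'⟩
    exact h
  have hperset : 0 < mapPeriod σ ∧ ∃ K : ℕ, σ^[K + mapPeriod σ] = σ^[K] := by
    have h := Nat.sInf_mem (s := {L : ℕ | 0 < L ∧ ∃ K : ℕ, σ^[K + L] = σ^[K]})
      ⟨L', hL', K', hKL'⟩
    exact h
  obtain ⟨L₁, hL₁, hK₀⟩ := hpre
  obtain ⟨hL₀, K₁, hK₁⟩ := hperset
  have key : ∀ x y : ℕ, mapPreperiod σ ≤ x → mapPreperiod σ ≤ y → y ≤ x →
      ((mapPeriod σ : ℤ)) ∣ (x : ℤ) - y → σ^[x] = σ^[y] := by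
    intro x y hx hy hyx hdvd
    obtain ⟨e, he⟩ := hdvd
    have he0 : 0 ≤ e := by nlinarith [Int.ofNat_le.mpr hyx]
    obtain ⟨d, rfl⟩ := Int.eq_ofNat_of_zero_le he0
    refine stmt8_per_aux σ hK₀ hK₁ hL₁ hx hy hyx ⟨d, ?_⟩
    have : (x : ℤ) = ((y + d * mapPeriod σ : ℕ) : ℤ) := by push_cast; linarith
    exact_mod_cast this
  rcases Nat.le_total b a with h | h
  · exact key a b ha hb h hab
  · exact (key b a hb ha h (by rw [← neg_sub]; exact dvd_neg.mpr hab)).symm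

/-- Auxiliary: commutation of reduction with iteration. -/
lemma stmt8_comm (f : ℤ → ℤ) (m : ℕ) [NeZero m]
    (hfm : ∀ x y : ℤ, (m : ℤ) ∣ x - y → (m : ℤ) ∣ f x - f y) :
    ∀ (j : ℕ) (x : ℤ),
      ((f^[j] x : ℤ) : ZMod m) = (intReduction f m)^[j] ((x : ℤ) : ZMod m) := by
  intro j
  induction j with
  | zero => intro x; simp
  | succ j ih =>
    intro x
    rw [Function.iterate_succ_apply', Function.iterate_succ_apply', ← ih]
    set z : ℤ := f^[j] x
    show ((f z : ℤ) : ZMod m) = ((f (((z : ZMod m)).val : ℤ) : ℤ) : ZMod m)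
    rw [ZMod.intCast_eq_intCast_iff]
    refine Int.modEq_iff_dvd.mpr (hfm _ _ ?_)
    rw [← ZMod.intCast_zmod_eq_zero_iff_dvd]
    push_cast
    simp [ZMod.natCast_val, ZMod.intCast_cast, ZMod.cast_id]

/-- Auxiliary: the `k`-step contraction property of a period map. -/
lemma stmt8_kstep (f : ℤ → ℤ) (P : ℕ → ℕ) (hP : IsPeriodMap f P)
    (n : ℕ) (hn : 0 < n) :
    ∀ (j : ℕ) (x y : ℤ), ((P^[j] n : ℕ) : ℤ) ∣ x - y →
      (n : ℤ) ∣ f^[j] x - f^[j] y := by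
  have hpos : ∀ j : ℕ, 0 < P^[j] n := by
    intro j
    induction j with
    | zero => simpa using hn
    | succ j ih => rw [Function.iterate_succ_apply']; exact hP.1 _ ih
  intro j
  induction j with
  | zero => intro x y h; simpa using h
  | succ j ih =>
    intro x y h
    rw [Function.iterate_succ_apply'] at h
    have h1 : ((P^[j] n : ℕ) : ℤ) ∣ f x - f y := hP.2 x y _ (hpos j) h
    have := ih (f x) (f y) h1
    simpa [Function.iterate_succ_apply] using this

theorem stmt_8 (f : ℤ → ℤ) (P : ℕ → ℕ) (hP : IsPeriodMap f P)
    (k m n : ℕ) (hk : 0 < k) (hm : 0 < m) (hn : 0 < n)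
    (hm₁ : m = P^[k] n) (hm₂ : m = P^[k + 1] n)
    (s t : ℤ) (u v : ℕ) (hu0 : 0 < u) (hv0 : 0 < v)
    (hst : (m : ℤ) ∣ s - t)
    (hu : k + mapPreperiod (intReduction f m) ≤ u)
    (hv : k + mapPreperiod (intReduction f m) ≤ v)
    (huv : (mapPeriod (intReduction f m) : ℤ) ∣ (u : ℤ) - (v : ℤ)) :
    (n : ℤ) ∣ f^[u] s - f^[v] t := by
  haveI : NeZero m := ⟨hm.ne'⟩
  set σ := intReduction f m with hσ
  -- P m = m
  have hPm : P m = m := by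
    have h2 := hm₂
    rw [Function.iterate_succ_apply', ← hm₁] at h2
    exact h2.symm
  have hfm : ∀ x y : ℤ, (m : ℤ) ∣ x - y → (m : ℤ) ∣ f x - f y := by
    intro x y h
    exact hP.2 x y m hm (by rwa [hPm])
  -- m ∣ f^[u-k] s - f^[v-k] t
  have hmid : (m : ℤ) ∣ f^[u - k] s - f^[v - k] t := by
    have hcast : ((f^[u - k] s : ℤ) : ZMod m) = ((f^[v - k] t : ℤ) : ZMod m) := by
      rw [stmt8_comm f m hfm, stmt8_comm f m hfm]
      have hstc : ((s : ℤ) : ZMod m) = ((t : ℤ) : ZMod m) := by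
        rw [ZMod.intCast_eq_intCast_iff]
        exact Int.modEq_iff_dvd.mpr (by rw [← neg_sub]; exact dvd_neg.mpr hst)
      rw [hstc]
      have hiter : σ^[u - k] = σ^[v - k] := by
        refine stmt8_per σ (by omega) (by omega) ?_
        have : ((u - k : ℕ) : ℤ) - ((v - k : ℕ) : ℤ) = (u : ℤ) - v := by
          push_cast [Nat.cast_sub (by omega : k ≤ u), Nat.cast_sub (by omega : k ≤ v)]
          ring
        rw [this]
        exact huv
      rw [hiter]
    rw [ZMod.intCast_eq_intCast_iff] at hcast
    exact (Int.modEq_iff_dvd.mp hcast.symm)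
  -- apply the k-step lemma
  have := stmt8_kstep f P hP n hn k (f^[u - k] s) (f^[v - k] t) (by rwa [← hm₁])
  rwa [← Function.iterate_add_apply, ← Function.iterate_add_apply,
    Nat.add_sub_cancel' (by omega : k ≤ u), Nat.add_sub_cancel' (by omega : k ≤ v)] at this
end

section
/- Let f : ℤ → ℤ be congruence stable and let x ∈ ℤ. Let (n_i) and (n'_i) be sequences of positive integers such that n_i → ∞ and n'_i → ∞ as i → ∞, and such that for every positive integer d, the residues n_i mod d are eventually constant, the residues n'_i mod d are eventually constant, and d ∣ (n_i − n'_i) for all sufficiently large i. Then for every positive integer n, the sequence of residues f^{n_i}(x) mod n is eventually constant, and its eventual value equals the eventual value of the sequence f^{n'_i}(x) mod n. -/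
open Filter

/-- `f` is congruence stable if it has a period map `P` such that the
iterates of `P` at any positive integer are eventually fixed. -/
def IsCongruenceStable (f : ℤ → ℤ) : Prop :=
  ∃ P : ℕ → ℕ, IsPeriodMap f P ∧ ∀ n : ℕ, 0 < n → ∃ k : ℕ, P^[k + 1] n = P^[k] n

theorem stmt_9 (f : ℤ → ℤ) (hf : IsCongruenceStable f) (x : ℤ)
    (ni ni' : ℕ → ℕ)
    (hni : Tendsto ni atTop atTop) (hni' : Tendsto ni' atTop atTop)
    (hres : ∀ d : ℕ, 0 < d → ∃ c : ZMod d, ∃ N : ℕ, ∀ i, N ≤ i → ((ni i : ℕ) : ZMod d) = c)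
    (hres' : ∀ d : ℕ, 0 < d → ∃ c : ZMod d, ∃ N : ℕ, ∀ i, N ≤ i → ((ni' i : ℕ) : ZMod d) = c)
    (hdvd : ∀ d : ℕ, 0 < d → ∃ N : ℕ, ∀ i, N ≤ i → (d : ℤ) ∣ (ni i : ℤ) - (ni' i : ℤ)) :
    ∀ n : ℕ, 0 < n → ∃ c : ZMod n,
      (∃ N : ℕ, ∀ i, N ≤ i → ((f^[ni i] x : ℤ) : ZMod n) = c) ∧
      (∃ N : ℕ, ∀ i, N ≤ i → ((f^[ni' i] x : ℤ) : ZMod n) = c) := by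
  obtain ⟨P, ⟨hPpos, hP⟩, hstab⟩ := hf
  intro n hn
  obtain ⟨k, hk⟩ := hstab n hn
  have hpos : ∀ j, 0 < P^[j] n := by
    intro j
    induction j with
    | zero => simpa using hn
    | succ j ih => rw [Function.iterate_succ_apply']; exact hPpos _ ih
  set Q := P^[k] n with hQdef
  have hQpos : 0 < Q := hpos k
  have hQfix : P Q = Q := by
    have h := hk; rwa [Function.iterate_succ_apply'] at h
  -- key: P^[j] n divides s - t implies n divides f^[j] s - f^[j] t
  have lemA : ∀ j (s t : ℤ), (P^[j] n : ℤ) ∣ s - t → (n : ℤ) ∣ f^[j] s - f^[j] t := by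
    intro j
    induction j with
    | zero => intro s t h; simpa using h
    | succ j ih =>
      intro s t h
      rw [Function.iterate_succ_apply'] at h
      have h2 := hP s t (P^[j] n) (hpos j) h
      simpa [Function.iterate_succ_apply] using ih (f s) (f t) h2
  have lemB : ∀ s t : ℤ, (Q : ℤ) ∣ s - t → (Q : ℤ) ∣ f s - f t := by
    intro s t h
    exact hP s t Q hQpos (by rwa [hQfix])
  haveI : NeZero Q := ⟨hQpos.ne'⟩
  set a : ℕ → ZMod Q := fun m => ((f^[m] x : ℤ) : ZMod Q) with ha
  have acongr : ∀ m m' : ℕ, a m = a m' ↔ (Q : ℤ) ∣ f^[m] x - f^[m'] x := by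
    intro m m'
    rw [ha]
    simp only
    rw [ZMod.intCast_eq_intCast_iff, Int.modEq_iff_dvd, dvd_sub_comm]
  have step : ∀ m m', a m = a m' → a (m + 1) = a (m' + 1) := by
    intro m m' h
    rw [acongr] at h ⊢
    simpa [Function.iterate_succ_apply'] using lemB _ _ h
  have step_iter : ∀ j m m', a m = a m' → a (m + j) = a (m' + j) := by
    intro j
    induction j with
    | zero => intro m m' h; simpa using h
    | succ j ih =>
      intro m m' h
      exact step _ _ (ih m m' h)
  -- pigeonhole: a is eventually periodic
  have hMT : ∃ M T, 0 < T ∧ a (M + T) = a M := by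
    obtain ⟨p, q, hpq, hapq⟩ := Finite.exists_ne_map_eq_of_infinite a
    rcases lt_or_gt_of_ne hpq with h | h
    · exact ⟨p, q - p, by omega, by rw [Nat.add_sub_cancel' h.le]; exact hapq.symm⟩
    · exact ⟨q, p - q, by omega, by rw [Nat.add_sub_cancel' h.le]; exact hapq⟩
  obtain ⟨M, T, hTpos, haMT⟩ := hMT
  have hper : ∀ m, M ≤ m → a (m + T) = a m := by
    intro m hm
    obtain ⟨j, rfl⟩ := Nat.exists_eq_add_of_le hm
    have h := step_iter j (M + T) M haMT
    calc a (M + j + T) = a (M + T + j) := by ring_nf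
    _ = a (M + j) := h
  have hper2 : ∀ j m, M ≤ m → a (m + j * T) = a m := by
    intro j
    induction j with
    | zero => intro m hm; simp
    | succ j ih =>
      intro m hm
      have h1 : a (m + j * T + T) = a (m + j * T) := hper _ (le_trans hm (Nat.le_add_right _ _))
      calc a (m + (j + 1) * T) = a (m + j * T + T) := by ring_nf
      _ = a m := h1.trans (ih m hm)
  have lemCcore : ∀ m m', M ≤ m → M ≤ m' → m ≤ m' → (T : ℤ) ∣ (m' : ℤ) - (m : ℤ) →
      a m' = a m := by
    intro m m' hm hm' hle hdv
    have hnat : T ∣ m' - m := by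
      have hcast : ((m' - m : ℕ) : ℤ) = (m' : ℤ) - m := by
        rw [Nat.cast_sub hle]
      rw [← Int.natCast_dvd_natCast, hcast]
      exact hdv
    obtain ⟨c, hc⟩ := hnat
    have hm'' : m' = m + c * T := by rw [Nat.mul_comm] at hc; omega
    rw [hm'']
    exact hper2 c m hm
  have lemC : ∀ m m', M + k ≤ m → M + k ≤ m' → (T : ℤ) ∣ (m : ℤ) - (m' : ℤ) →
      (n : ℤ) ∣ f^[m] x - f^[m'] x := by
    have key : ∀ m m', M + k ≤ m → M + k ≤ m' → m ≤ m' → (T : ℤ) ∣ (m : ℤ) - (m' : ℤ) →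
        (n : ℤ) ∣ f^[m] x - f^[m'] x := by
      intro m m' hm hm' hle hdv
      have hm1 : m = k + (m - k) := by omega
      have hm2 : m' = k + (m' - k) := by omega
      have hQd : (Q : ℤ) ∣ f^[m - k] x - f^[m' - k] x := by
        rw [← acongr]
        refine (lemCcore (m - k) (m' - k) (by omega) (by omega) (by omega) ?_).symm
        have hc : ((m' - k : ℕ) : ℤ) - ((m - k : ℕ) : ℤ) = (m' : ℤ) - m := by
          rw [Nat.cast_sub (by omega), Nat.cast_sub (by omega)]; ring
        rw [hc]
        rw [dvd_sub_comm] at hdv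
        exact hdv
      have h2 := lemA k _ _ hQd
      rw [hm1, hm2, Function.iterate_add_apply, Function.iterate_add_apply]
      exact h2
    intro m m' hm hm' hdv
    rcases le_total m m' with h | h
    · exact key m m' hm hm' h hdv
    · rw [dvd_sub_comm]
      exact key m' m hm' hm h (by rwa [dvd_sub_comm] at hdv)
  -- assemble
  obtain ⟨cT, N1, hN1⟩ := hres T hTpos
  obtain ⟨cT', N2, hN2⟩ := hres' T hTpos
  obtain ⟨N3, hN3⟩ := hdvd T hTpos
  obtain ⟨N4, hN4⟩ := eventually_atTop.mp (hni.eventually_ge_atTop (M + k))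
  obtain ⟨N5, hN5⟩ := eventually_atTop.mp (hni'.eventually_ge_atTop (M + k))
  set N := max (max N1 N2) (max N3 (max N4 N5)) with hN
  have hNle : N1 ≤ N ∧ N2 ≤ N ∧ N3 ≤ N ∧ N4 ≤ N ∧ N5 ≤ N := by
    refine ⟨?_, ?_, ?_, ?_, ?_⟩ <;> simp [hN]
  refine ⟨((f^[ni N] x : ℤ) : ZMod n), ⟨N, fun i hi => ?_⟩, ⟨N, fun i hi => ?_⟩⟩
  · rw [ZMod.intCast_eq_intCast_iff, Int.modEq_iff_dvd, dvd_sub_comm]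
    refine lemC _ _ (hN4 i (le_trans hNle.2.2.2.1 hi)) (hN4 N hNle.2.2.2.1) ?_
    have h1 : ((ni i : ℕ) : ZMod T) = ((ni N : ℕ) : ZMod T) := by
      rw [hN1 i (le_trans hNle.1 hi), hN1 N hNle.1]
    have h2 := (ZMod.natCast_eq_natCast_iff _ _ _).mp h1
    have h3 := h2.dvd
    rw [dvd_sub_comm]
    exact_mod_cast h3
  · rw [ZMod.intCast_eq_intCast_iff, Int.modEq_iff_dvd, dvd_sub_comm]
    refine lemC _ _ (hN5 i (le_trans hNle.2.2.2.2 hi)) (hN4 N hNle.2.2.2.1) ?_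
    have h1 : ((ni i : ℕ) : ZMod T) = ((ni N : ℕ) : ZMod T) := by
      rw [hN1 i (le_trans hNle.1 hi), hN1 N hNle.1]
    have h2 := (ZMod.natCast_eq_natCast_iff _ _ _).mp h1
    have h3 : (T : ℤ) ∣ (ni i : ℤ) - (ni N : ℤ) := by
      rw [dvd_sub_comm]; exact_mod_cast h2.dvd
    have h4 : (T : ℤ) ∣ (ni i : ℤ) - (ni' i : ℤ) := hN3 i (le_trans hNle.2.2.1 hi)
    have h5 : (ni' i : ℤ) - (ni N : ℤ) = ((ni i : ℤ) - ni N) - ((ni i : ℤ) - ni' i) := by ring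
    rw [h5]
    exact dvd_sub h3 h4
end

section
/- Let f : ℤ → ℤ be congruence preserving and let n, n' be positive integers. Then λ_f(lcm(n, n')) = lcm(λ_f(n), λ_f(n')). In particular, if n ∣ n' then λ_f(n) ∣ λ_f(n'). -/
/-!
An iterate identity `f_m^[A] = f_m^[B]` says exactly that `f^[A] x ≡ f^[B] x [ZMOD m]` for all
integers `x`, and a congruence holds modulo `lcm n n'` iff it holds modulo `n` and modulo `n'`.
Hence `L` is an eventual period of `f_{lcm n n'}` iff it is one of both `f_n` and `f_n'`. The
eventual periods of a self-map of a finite set are exactly the multiples of its least period, so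
`λ_f(lcm n n')` and `lcm (λ_f n) (λ_f n')` have the same multiples.
-/

/-- `f : ℤ → ℤ` is congruence preserving if `n ∣ (s − t)` implies
`n ∣ (f(s) − f(t))` for every positive integer `n`. -/
def IsCongruencePreserving (f : ℤ → ℤ) : Prop :=
  ∀ (s t : ℤ) (n : ℕ), 0 < n → (n : ℤ) ∣ s - t → (n : ℤ) ∣ f s - f t

section mapPeriod

variable {α : Type*} (σ : α → α)

theorem iterate_add_eq_of_le {K K' L : ℕ} (h : σ^[K + L] = σ^[K]) (hK : K ≤ K') :
    σ^[K' + L] = σ^[K'] := by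
  obtain ⟨d, rfl⟩ := Nat.exists_eq_add_of_le hK
  rw [show K + d + L = d + (K + L) by omega, Function.iterate_add, h, ← Function.iterate_add,
    Nat.add_comm]

theorem iterate_add_mul_eq {K L : ℕ} (h : σ^[K + L] = σ^[K]) (k : ℕ) :
    σ^[K + k * L] = σ^[K] := by
  induction k with
  | zero => simp
  | succ k ih =>
    rw [show K + (k + 1) * L = L + (K + k * L) by ring, Function.iterate_add, ih,
      ← Function.iterate_add, Nat.add_comm, h]

theorem exists_iterate_add_and_iff {β : Type*} (τ : β → β) (L : ℕ) :
    (∃ K, σ^[K + L] = σ^[K] ∧ τ^[K + L] = τ^[K]) ↔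
      (∃ K, σ^[K + L] = σ^[K]) ∧ ∃ K, τ^[K + L] = τ^[K] := by
  refine ⟨fun ⟨K, hσ, hτ⟩ => ⟨⟨K, hσ⟩, ⟨K, hτ⟩⟩, fun ⟨⟨K, hσ⟩, ⟨K', hτ⟩⟩ => ?_⟩
  exact ⟨max K K', iterate_add_eq_of_le σ hσ (le_max_left K K'),
    iterate_add_eq_of_le τ hτ (le_max_right K K')⟩

theorem mapPeriod_mem [Finite α] :
    0 < mapPeriod σ ∧ ∃ K, σ^[K + mapPeriod σ] = σ^[K] := by
  refine Nat.sInf_mem (s := {L : ℕ | 0 < L ∧ ∃ K : ℕ, σ^[K + L] = σ^[K]}) ?_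
  obtain ⟨a, b, hab, h⟩ := Finite.exists_ne_map_eq_of_infinite fun j : ℕ => σ^[j]
  rcases Nat.lt_or_gt_of_ne hab with hlt | hlt
  · exact ⟨b - a, by omega, a, by rwa [Nat.add_sub_cancel' hlt.le, eq_comm]⟩
  · exact ⟨a - b, by omega, b, by rwa [Nat.add_sub_cancel' hlt.le]⟩

theorem mapPeriod_dvd_iff [Finite α] (L : ℕ) :
    mapPeriod σ ∣ L ↔ ∃ K, σ^[K + L] = σ^[K] := by
  obtain ⟨hpos, Kp, hp⟩ := mapPeriod_mem σ
  constructor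
  · rintro ⟨k, rfl⟩
    exact ⟨Kp, by rw [Nat.mul_comm]; exact iterate_add_mul_eq σ hp k⟩
  rintro ⟨K, h⟩
  set p := mapPeriod σ
  set K₀ := max K Kp
  -- `L % p` is again an eventual period, so it cannot be positive by minimality of `p`.
  have hmod : σ^[K₀ + L % p] = σ^[K₀] :=
    calc σ^[K₀ + L % p]
        = σ^[K₀ + L % p + L / p * p] :=
          (iterate_add_mul_eq σ (iterate_add_eq_of_le σ hp (by omega)) _).symm
      _ = σ^[K₀ + L] := by rw [Nat.add_assoc, Nat.mod_add_div']
      _ = σ^[K₀] := iterate_add_eq_of_le σ h (le_max_left K Kp)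
  refine Nat.dvd_of_mod_eq_zero (Nat.eq_zero_of_not_pos fun hr => ?_)
  exact absurd (Nat.sInf_le ⟨hr, K₀, hmod⟩ : p ≤ L % p) (Nat.not_le.mpr (Nat.mod_lt L hpos))

variable {β γ : Type*} [Finite α] [Finite β] [Finite γ]

theorem mapPeriod_eq_lcm_of_iterate_eq_iff (τ : β → β) (ρ : γ → γ)
    (h : ∀ A B, ρ^[A] = ρ^[B] ↔ σ^[A] = σ^[B] ∧ τ^[A] = τ^[B]) :
    mapPeriod ρ = Nat.lcm (mapPeriod σ) (mapPeriod τ) := by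
  refine Nat.dvd_right_iff_eq.mp fun L => ?_
  rw [mapPeriod_dvd_iff, Nat.lcm_dvd_iff, mapPeriod_dvd_iff, mapPeriod_dvd_iff,
    ← exists_iterate_add_and_iff]
  simp only [h]

end mapPeriod

namespace IsCongruencePreserving

variable {f : ℤ → ℤ} (hf : IsCongruencePreserving f)
include hf

theorem intCast_eq_intCast {m : ℕ} [NeZero m] {a b : ℤ} (h : (a : ZMod m) = b) :
    (f a : ZMod m) = f b := by
  rw [ZMod.intCast_eq_intCast_iff_dvd_sub] at h ⊢
  exact hf b a m (Nat.pos_of_neZero m) h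

theorem semiconj_intReduction (m : ℕ) [NeZero m] :
    Function.Semiconj (Int.cast : ℤ → ZMod m) f (intReduction f m) := fun x =>
  hf.intCast_eq_intCast (by rw [Int.cast_natCast, ZMod.natCast_zmod_val])

theorem intReduction_iterate_eq_iff (m : ℕ) [NeZero m] (A B : ℕ) :
    (intReduction f m)^[A] = (intReduction f m)^[B] ↔ ∀ x : ℤ, f^[A] x ≡ f^[B] x [ZMOD m] := by
  have hiter (k : ℕ) (x : ℤ) : (intReduction f m)^[k] x = (f^[k] x : ZMod m) :=
    ((hf.semiconj_intReduction m).iterate_right k x).symm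
  simp only [funext_iff, ZMod.intCast_surjective.forall, hiter, ZMod.intCast_eq_intCast_iff]

theorem intReduction_lcm_iterate_eq_iff (n n' : ℕ) [NeZero (n.lcm n')] (A B : ℕ) :
    (intReduction f (n.lcm n'))^[A] = (intReduction f (n.lcm n'))^[B] ↔
      (intReduction f n)^[A] = (intReduction f n)^[B] ∧
        (intReduction f n')^[A] = (intReduction f n')^[B] := by
  obtain ⟨hn, hn'⟩ : n ≠ 0 ∧ n' ≠ 0 := not_or.mp (Nat.lcm_eq_zero_iff.not.mp NeZero.out)
  have := NeZero.mk hn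
  have := NeZero.mk hn'
  rw [hf.intReduction_iterate_eq_iff, hf.intReduction_iterate_eq_iff,
    hf.intReduction_iterate_eq_iff, ← forall_and]
  simp only [Int.modEq_and_modEq_iff_modEq_lcm, Int.lcm_natCast_natCast]

end IsCongruencePreserving

/-- `λ_f(lcm(n,n')) = lcm(λ_f(n), λ_f(n'))`, and in particular
`n ∣ n'` implies `λ_f(n) ∣ λ_f(n')`. -/
theorem stmt_11 (f : ℤ → ℤ) (hf : IsCongruencePreserving f)
    (n n' : ℕ) (hn : 0 < n) (hn' : 0 < n') :
    mapPeriod (intReduction f (Nat.lcm n n')) =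
      Nat.lcm (mapPeriod (intReduction f n)) (mapPeriod (intReduction f n')) ∧
    (n ∣ n' → mapPeriod (intReduction f n) ∣ mapPeriod (intReduction f n')) := by
  have := NeZero.of_pos hn
  have := NeZero.of_pos hn'
  have := NeZero.of_pos (Nat.lcm_pos hn hn')
  have hlcm := mapPeriod_eq_lcm_of_iterate_eq_iff _ _ _ (hf.intReduction_lcm_iterate_eq_iff n n')
  refine ⟨hlcm, fun hdvd => ?_⟩
  rw [Nat.lcm_eq_right hdvd] at hlcm
  exact hlcm ▸ Nat.dvd_lcm_left _ _
end

section
/- Let f : ℤ → ℤ be congruence preserving, p a prime number and a a positive integer. Then λ_f(p^{a+1}) divides lcm{1, 2, …, p} · λ_f(p^a). -/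
open Function

section Dynamics

variable {X Y : Type*}

theorem iterate_add_eq_iterate_iff {σ : X → X} {K L : ℕ} :
    σ^[K + L] = σ^[K] ↔ ∀ x, IsPeriodicPt σ L (σ^[K] x) := by
  simp only [funext_iff, IsPeriodicPt, IsFixedPt, ← iterate_add_apply, add_comm L K]

theorem mapPeriod_dvd {σ : X → X} {K M : ℕ} (hM : 0 < M) (h : σ^[K + M] = σ^[K]) :
    mapPeriod σ ∣ M := by
  obtain ⟨hpos, K', hK'⟩ : mapPeriod σ ∈ {L : ℕ | 0 < L ∧ ∃ K : ℕ, σ^[K + L] = σ^[K]} :=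
    Nat.sInf_mem ⟨M, hM, K, h⟩
  have hgcd : σ^[K' + K + (mapPeriod σ).gcd M] = σ^[K' + K] := by
    refine iterate_add_eq_iterate_iff.mpr fun x => ?_
    rw [iterate_add_apply]
    exact (iterate_add_eq_iterate_iff.mp hK' _).gcd
      ((iterate_add_eq_iterate_iff.mp h x).apply_iterate K')
  have hle : mapPeriod σ ≤ (mapPeriod σ).gcd M :=
    Nat.sInf_le ⟨Nat.gcd_pos_of_pos_right _ hM, _, hgcd⟩
  exact Nat.gcd_eq_left_iff_dvd.mp (le_antisymm (Nat.gcd_le_left M hpos) hle)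

theorem mapPeriod_spec [Finite X] (σ : X → X) :
    0 < mapPeriod σ ∧ ∃ K, σ^[K + mapPeriod σ] = σ^[K] := by
  show mapPeriod σ ∈ {L : ℕ | 0 < L ∧ ∃ K : ℕ, σ^[K + L] = σ^[K]}
  refine Nat.sInf_mem ?_
  obtain ⟨i, j, hne, hij⟩ := Finite.exists_ne_map_eq_of_infinite (fun n : ℕ => σ^[n])
  rcases hne.lt_or_gt with hlt | hlt
  · exact ⟨j - i, by omega, i, by rw [Nat.add_sub_cancel' hlt.le]; exact hij.symm⟩
  · exact ⟨i - j, by omega, j, by rw [Nat.add_sub_cancel' hlt.le]; exact hij⟩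

theorem isPeriodicPt_lcm_of_iterate_mem {σ : X → X} {s : Set X} {k : ℕ} (hs : s.Finite)
    (hk : s.ncard ≤ k) {y : X} (hy : ∀ i ≤ k, σ^[i] y ∈ s) :
    IsPeriodicPt σ ((Finset.Icc 1 k).lcm id) (σ^[k] y) := by
  obtain ⟨i, hi, j, hj, hne, heq⟩ := Set.exists_ne_map_eq_of_ncard_lt_of_maps_to
    (s := Set.Iic k) (f := (σ^[·] y)) (by simpa using Nat.lt_succ_of_le hk) hy hs
  wlog hij : i < j generalizing i j
  · exact this j hj i hi hne.symm heq.symm (by omega)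
  rw [Set.mem_Iic] at hi hj
  have hper : IsPeriodicPt σ (j - i) (σ^[i] y) := by
    rw [IsPeriodicPt, IsFixedPt, ← iterate_add_apply, Nat.sub_add_cancel hij.le]
    exact heq.symm
  have hdvd : j - i ∣ (Finset.Icc 1 k).lcm id :=
    Finset.dvd_lcm (s := Finset.Icc 1 k) (f := id)
      (Finset.mem_Icc.mpr ⟨by omega, by omega⟩)
  have := (hper.trans_dvd hdvd).apply_iterate (k - i)
  rwa [← iterate_add_apply, Nat.sub_add_cancel hi] at this

theorem mapPeriod_dvd_lcm_mul_of_semiconj [Finite X] [Finite Y] {π : X → Y} {g : X → X}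
    {h : Y → Y} (hπ : Semiconj π g h) {k : ℕ} (hfib : ∀ c, (π ⁻¹' {c}).ncard ≤ k) :
    mapPeriod g ∣ (Finset.Icc 1 k).lcm id * mapPeriod h := by
  obtain ⟨hL, K, hK⟩ := mapPeriod_spec h
  set L := mapPeriod h
  have hN : 0 < (Finset.Icc 1 k).lcm id := Nat.pos_of_ne_zero (by simp [Finset.lcm_eq_zero_iff])
  refine mapPeriod_dvd (K := K + L * k) (Nat.mul_pos hN hL) ?_
  refine iterate_add_eq_iterate_iff.mpr fun x => ?_
  have hfibre (i : ℕ) : (g^[L])^[i] (g^[K] x) ∈ π ⁻¹' {h^[K] (π x)} := by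
    rw [Set.mem_preimage, Set.mem_singleton_iff, ← iterate_mul, ← iterate_add_apply,
      (hπ.iterate_right _).eq, iterate_add_apply]
    exact ((iterate_add_eq_iterate_iff.mp hK (π x)).mul_const i).eq
  have := isPeriodicPt_lcm_of_iterate_mem (Set.toFinite _) (hfib _) fun i _ => hfibre i
  show IsFixedPt (g^[_ * L]) (g^[K + L * k] x)
  rwa [mul_comm _ L, iterate_mul, add_comm K, iterate_add_apply, iterate_mul]

end Dynamics

theorem ZMod.ncard_castHom_fiber_le (m k : ℕ) [NeZero m] [NeZero k] (c : ZMod m) :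
    (castHom (dvd_mul_right m k) (ZMod m) ⁻¹' {c}).ncard ≤ k := by
  have hval (x : ZMod (m * k)) : (castHom (dvd_mul_right m k) (ZMod m) x).val = x.val % m := by
    rw [castHom_apply, cast_eq_val, val_natCast]
  calc _ ≤ (Set.Iio k).ncard := Set.ncard_le_ncard_of_injOn (fun x => x.val / m) ?_ ?_
    _ = k := Set.ncard_Iio_nat k
  · exact fun x _ => Nat.div_lt_of_lt_mul x.val_lt
  · intro x hx y hy hxy
    rw [Set.mem_preimage, Set.mem_singleton_iff] at hx hy
    apply ZMod.val_injective
    rw [← Nat.div_add_mod x.val m, ← Nat.div_add_mod y.val m, ← hval, ← hval, hx, hy]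
    exact congrArg (m * · + c.val) hxy

namespace IsCongruencePreserving

variable {f : ℤ → ℤ}

theorem modEq (hf : IsCongruencePreserving f) {n : ℕ} (hn : 0 < n) {s t : ℤ}
    (h : s ≡ t [ZMOD n]) : f s ≡ f t [ZMOD n] :=
  Int.modEq_iff_dvd.mpr (hf t s n hn (Int.modEq_iff_dvd.mp h))

theorem semiconj_castHom (hf : IsCongruencePreserving f) {m n : ℕ} [NeZero m] [NeZero n]
    (hd : m ∣ n) :
    Semiconj (ZMod.castHom hd (ZMod m)) (intReduction f n) (intReduction f m) := by
  intro x
  simp only [intReduction, map_intCast]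
  refine (ZMod.intCast_eq_intCast_iff _ _ m).mpr (hf.modEq (NeZero.pos m) ?_)
  rw [← ZMod.intCast_eq_intCast_iff, Int.cast_natCast, Int.cast_natCast, ZMod.natCast_zmod_val, ZMod.castHom_apply,
    ZMod.cast_eq_val]

theorem mapPeriod_intReduction_mul_dvd (hf : IsCongruencePreserving f) (m k : ℕ) [NeZero m]
    [NeZero k] :
    mapPeriod (intReduction f (m * k)) ∣ (Finset.Icc 1 k).lcm id * mapPeriod (intReduction f m) :=
  mapPeriod_dvd_lcm_mul_of_semiconj (hf.semiconj_castHom (dvd_mul_right m k))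
    (ZMod.ncard_castHom_fiber_le m k)

end IsCongruencePreserving

theorem stmt_12_general (f : ℤ → ℤ) (hf : IsCongruencePreserving f)
    (p : ℕ) (hp : p.Prime) (a : ℕ) :
    mapPeriod (intReduction f (p ^ (a + 1))) ∣
      (Finset.Icc 1 p).lcm id * mapPeriod (intReduction f (p ^ a)) := by
  have : NeZero p := ⟨hp.ne_zero⟩
  rw [pow_succ]
  exact hf.mapPeriod_intReduction_mul_dvd (p ^ a) p

/-- `λ_f(p^{a+1}) ∣ lcm{1,…,p} · λ_f(p^a)`. -/
theorem stmt_12 (f : ℤ → ℤ) (hf : IsCongruencePreserving f)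
    (p : ℕ) (hp : p.Prime) (a : ℕ) (ha : 0 < a) :
    mapPeriod (intReduction f (p ^ (a + 1))) ∣
      (Finset.Icc 1 p).lcm id * mapPeriod (intReduction f (p ^ a)) :=
  stmt_12_general f hf p hp a
end

section
/- Let f be a tower-stable polynomial with integer coefficients, a an integer, p a prime number, and k a positive integer. If p divides the mod-p multiplier μ_p of f at a, then λ_{f,a}(p^k) = λ_{f,a}(p) and ρ_{f,a}(p^k) ≤ ρ_{f,a}(p) + (k − 1)·λ_{f,a}(p). -/
/-- `ρ_{f,a}(n)`: the tail length of the reduction of `f` mod `n` at the class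
of `a`, i.e. the least `k` with `f^{k+l}(a) ≡ f^k(a) (mod n)` for some `l > 0`. -/
noncomputable def polyTail (f : Polynomial ℤ) (a : ℤ) (n : ℕ) : ℕ :=
  sInf {k : ℕ | ∃ l : ℕ, 0 < l ∧
    (n : ℤ) ∣ (fun z => f.eval z)^[k + l] a - (fun z => f.eval z)^[k] a}

/-- `λ_{f,a}(n)`: the cycle length of the reduction of `f` mod `n` at the class
of `a`, i.e. the least `l > 0` with `f^{k+l}(a) ≡ f^k(a) (mod n)` for some `k`. -/
noncomputable def polyCycle (f : Polynomial ℤ) (a : ℤ) (n : ℕ) : ℕ :=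
  sInf {l : ℕ | 0 < l ∧ ∃ k : ℕ,
    (n : ℤ) ∣ (fun z => f.eval z)^[k + l] a - (fun z => f.eval z)^[k] a}

/-- The `m`-th iterate of `f` as a polynomial. -/
noncomputable def polyIter (f : Polynomial ℤ) (m : ℕ) : Polynomial ℤ :=
  (fun q => q.comp f)^[m] Polynomial.X

/-- The mod `p` multiplier `μ_p = (f^{λ(p)})'(f^{ρ(p)}(a))` of `f` at `a`. -/
noncomputable def muP (f : Polynomial ℤ) (a : ℤ) (p : ℕ) : ℤ :=
  (Polynomial.derivative (polyIter f (polyCycle f a p))).eval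
    ((fun z => f.eval z)^[polyTail f a p] a)

/-!
Put `b_j = f^{ρ + jλ}(a)` with `ρ, λ` taken mod `p`, and `g = f^λ`, so that `b_{j+1} = g(b_j)`.
All `b_j` are congruent mod `p`, so `p ∣ g'(b_j)` because `p ∣ μ_p = g'(b_0)`. Taylor expansion
`g(y) - g(x) = g'(x)(y - x) + c(y - x)²` then lifts `p^{j+1} ∣ b_{j+1} - b_j` to
`p^{j+2} ∣ b_{j+2} - b_{j+1}`. Hence the orbit already repeats mod `p^k` after `ρ + (k-1)λ` steps
with period `λ`, which bounds the tail and gives `λ(p^k) ≤ λ(p)`; conversely `λ(p) ∣ λ(p^k)`.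
-/

open Polynomial

theorem Int.ModEq.polynomial_eval (g : ℤ[X]) {n x y : ℤ} (h : x ≡ y [ZMOD n]) :
    g.eval x ≡ g.eval y [ZMOD n] :=
  Int.modEq_of_dvd (h.dvd.trans (sub_dvd_eval_sub y x g))

theorem Polynomial.pow_add_two_dvd_eval_sub {R : Type*} [CommRing R] (g : R[X]) {n x y : R}
    {j : ℕ} (hg : n ∣ g.derivative.eval x) (hxy : n ^ (j + 1) ∣ y - x) :
    n ^ (j + 2) ∣ g.eval y - g.eval x := by
  obtain ⟨c, hc⟩ := binomExpansion g x (y - x)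
  rw [add_sub_cancel] at hc
  have hlin : n ^ (j + 2) ∣ g.derivative.eval x * (y - x) := by
    rw [pow_succ']
    exact mul_dvd_mul hg hxy
  have hsq : n ^ (j + 2) ∣ (y - x) ^ 2 := by
    have := pow_dvd_pow_of_dvd hxy 2
    rw [← pow_mul] at this
    exact (pow_dvd_pow n (by omega)).trans this
  rw [hc, show g.eval x + g.derivative.eval x * (y - x) + c * (y - x) ^ 2 - g.eval x =
      g.derivative.eval x * (y - x) + c * (y - x) ^ 2 by ring]
  exact dvd_add hlin (hsq.mul_left c)

theorem eval_polyIter (f : ℤ[X]) (m : ℕ) (z : ℤ) :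
    (polyIter f m).eval z = (fun z => f.eval z)^[m] z := by
  induction m generalizing z with
  | zero => simp [polyIter]
  | succ m ih =>
    rw [polyIter, Function.iterate_succ_apply', ← polyIter, eval_comp, ih,
      Function.iterate_succ_apply]

section Orbit

variable (f : ℤ[X]) (a : ℤ)

def polyOrbit (m : ℕ) : ℤ := (fun z => f.eval z)^[m] a

theorem polyOrbit_add (m l : ℕ) :
    polyOrbit f a (m + l) = (polyIter f l).eval (polyOrbit f a m) := by
  rw [eval_polyIter, polyOrbit, polyOrbit, add_comm, Function.iterate_add_apply]

variable {f a} {n : ℤ} {k l : ℕ}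

theorem polyOrbit_add_modEq_add {m m' : ℕ} (h : polyOrbit f a m ≡ polyOrbit f a m' [ZMOD n])
    (t : ℕ) : polyOrbit f a (m + t) ≡ polyOrbit f a (m' + t) [ZMOD n] := by
  rw [polyOrbit_add, polyOrbit_add]
  exact h.polynomial_eval _

theorem polyOrbit_modEq_add_mul (h : polyOrbit f a k ≡ polyOrbit f a (k + l) [ZMOD n]) (j : ℕ) :
    polyOrbit f a k ≡ polyOrbit f a (k + j * l) [ZMOD n] := by
  induction j with
  | zero => simp [Int.ModEq.refl]
  | succ j ih =>
    rw [show k + (j + 1) * l = k + l + j * l by ring]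
    exact ih.trans (polyOrbit_add_modEq_add h (j * l))

theorem polyOrbit_modEq_of_le {k' : ℕ} (h : polyOrbit f a k ≡ polyOrbit f a (k + l) [ZMOD n])
    (hk : k ≤ k') : polyOrbit f a k' ≡ polyOrbit f a (k' + l) [ZMOD n] := by
  obtain ⟨t, rfl⟩ := Nat.exists_eq_add_of_le hk
  simpa only [add_right_comm] using polyOrbit_add_modEq_add h t

end Orbit

section TailCycle

variable {f : ℤ[X]} {a : ℤ} {n k l : ℕ}

variable (f a) in
theorem exists_polyOrbit_modEq (hn : n ≠ 0) :
    ∃ k l, 0 < l ∧ polyOrbit f a k ≡ polyOrbit f a (k + l) [ZMOD n] := by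
  have : NeZero n := ⟨hn⟩
  obtain ⟨i, j, hij, heq⟩ :=
    Finite.exists_ne_map_eq_of_infinite fun m => (polyOrbit f a m : ZMod n)
  wlog hlt : i < j generalizing i j
  · exact this j i hij.symm heq.symm (by omega)
  refine ⟨i, j - i, by omega, ?_⟩
  rw [Nat.add_sub_cancel' hlt.le]
  exact (ZMod.intCast_eq_intCast_iff' _ _ _).1 heq

theorem polyCycle_le (hl : 0 < l) (h : polyOrbit f a k ≡ polyOrbit f a (k + l) [ZMOD n]) :
    polyCycle f a n ≤ l :=
  Nat.sInf_le ⟨hl, k, h.dvd⟩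

theorem polyTail_le (hl : 0 < l) (h : polyOrbit f a k ≡ polyOrbit f a (k + l) [ZMOD n]) :
    polyTail f a n ≤ k :=
  Nat.sInf_le ⟨l, hl, h.dvd⟩

variable (f a) in
theorem polyCycle_spec (hn : n ≠ 0) :
    0 < polyCycle f a n ∧
      ∃ k, polyOrbit f a k ≡ polyOrbit f a (k + polyCycle f a n) [ZMOD n] := by
  obtain ⟨k, l, hl, h⟩ := exists_polyOrbit_modEq f a hn
  obtain ⟨hpos, k₀, hk₀⟩ : polyCycle f a n ∈ _ := Nat.sInf_mem ⟨l, hl, k, h.dvd⟩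
  exact ⟨hpos, k₀, Int.modEq_of_dvd hk₀⟩

variable (f a) in
theorem polyTail_spec (hn : n ≠ 0) :
    ∃ l, 0 < l ∧ polyOrbit f a (polyTail f a n) ≡ polyOrbit f a (polyTail f a n + l) [ZMOD n] := by
  obtain ⟨k, l, hl, h⟩ := exists_polyOrbit_modEq f a hn
  obtain ⟨l₀, hl₀, h₀⟩ : polyTail f a n ∈ _ := Nat.sInf_mem ⟨k, l, hl, h.dvd⟩
  exact ⟨l₀, hl₀, Int.modEq_of_dvd h₀⟩

theorem polyCycle_dvd (hn : n ≠ 0)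
    (h : polyOrbit f a k ≡ polyOrbit f a (k + l) [ZMOD n]) : polyCycle f a n ∣ l := by
  obtain ⟨hpos, k₀, hk₀⟩ := polyCycle_spec f a hn
  set K := max k k₀
  have hK : polyOrbit f a K ≡ polyOrbit f a (K + l % polyCycle f a n) [ZMOD n] := calc
    polyOrbit f a K ≡ polyOrbit f a (K + l) [ZMOD n] := polyOrbit_modEq_of_le h (le_max_left _ _)
    _ = polyOrbit f a (K + l / polyCycle f a n * polyCycle f a n + l % polyCycle f a n) := by
      rw [add_assoc, Nat.div_add_mod']
    _ ≡ polyOrbit f a (K + l % polyCycle f a n) [ZMOD n] :=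
      polyOrbit_add_modEq_add (polyOrbit_modEq_add_mul
        (polyOrbit_modEq_of_le hk₀ (le_max_right _ _)) _).symm _
  refine Nat.dvd_of_mod_eq_zero (Nat.eq_zero_of_not_pos fun hr => ?_)
  exact (polyCycle_le hr hK).not_gt (Nat.mod_lt _ hpos)

variable (f a) in
theorem polyOrbit_polyTail_modEq (hn : n ≠ 0) :
    polyOrbit f a (polyTail f a n) ≡
      polyOrbit f a (polyTail f a n + polyCycle f a n) [ZMOD n] := by
  obtain ⟨l, hl, hρ⟩ := polyTail_spec f a hn
  obtain ⟨-, k₀, hk₀⟩ := polyCycle_spec f a hn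
  set M := polyTail f a n + k₀ * l
  have hM : polyOrbit f a (polyTail f a n) ≡ polyOrbit f a M [ZMOD n] :=
    polyOrbit_modEq_add_mul hρ k₀
  calc polyOrbit f a (polyTail f a n)
      ≡ polyOrbit f a M [ZMOD n] := hM
    _ ≡ polyOrbit f a (M + polyCycle f a n) [ZMOD n] :=
      polyOrbit_modEq_of_le hk₀ ((Nat.le_mul_of_pos_right k₀ hl).trans (Nat.le_add_left _ _))
    _ ≡ polyOrbit f a (polyTail f a n + polyCycle f a n) [ZMOD n] :=
      polyOrbit_add_modEq_add hM.symm _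

theorem polyOrbit_modEq_pow_succ (hn : n ≠ 0) (hmu : (n : ℤ) ∣ muP f a n) (j : ℕ) :
    polyOrbit f a (polyTail f a n + j * polyCycle f a n) ≡
      polyOrbit f a (polyTail f a n + j * polyCycle f a n + polyCycle f a n)
        [ZMOD (n : ℤ) ^ (j + 1)] := by
  have hbase := polyOrbit_polyTail_modEq f a hn
  have hder (i : ℕ) : (n : ℤ) ∣ (polyIter f (polyCycle f a n)).derivative.eval
      (polyOrbit f a (polyTail f a n + i * polyCycle f a n)) :=
    Int.modEq_zero_iff_dvd.1 (((polyOrbit_modEq_add_mul hbase i).polynomial_eval _).symm.trans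
      (Int.modEq_zero_iff_dvd.2 hmu))
  induction j with
  | zero => simpa using hbase
  | succ j ih =>
    have hlift := pow_add_two_dvd_eval_sub _ (hder j) ih.dvd
    rw [← polyOrbit_add, ← polyOrbit_add] at hlift
    rw [show polyTail f a n + (j + 1) * polyCycle f a n =
      polyTail f a n + j * polyCycle f a n + polyCycle f a n by ring]
    exact Int.modEq_of_dvd hlift

theorem polyOrbit_modEq_pow (hn : n ≠ 0) (hmu : (n : ℤ) ∣ muP f a n) (hk : 0 < k) :
    polyOrbit f a (polyTail f a n + (k - 1) * polyCycle f a n) ≡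
      polyOrbit f a (polyTail f a n + (k - 1) * polyCycle f a n + polyCycle f a n)
        [ZMOD ↑(n ^ k)] := by
  obtain ⟨j, rfl⟩ : ∃ j, k = j + 1 := ⟨k - 1, by omega⟩
  simpa using polyOrbit_modEq_pow_succ hn hmu j

theorem polyCycle_pow_eq (hn : n ≠ 0) (hmu : (n : ℤ) ∣ muP f a n) (hk : 0 < k) :
    polyCycle f a (n ^ k) = polyCycle f a n := by
  obtain ⟨hpos, -⟩ := polyCycle_spec f a hn
  obtain ⟨hpos', k₀, hk₀⟩ := polyCycle_spec f a (pow_ne_zero k hn)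
  have hdvd : (n : ℤ) ∣ ↑(n ^ k) := by exact_mod_cast dvd_pow_self n hk.ne'
  exact le_antisymm (polyCycle_le hpos (polyOrbit_modEq_pow hn hmu hk))
    (Nat.le_of_dvd hpos' (polyCycle_dvd hn (hk₀.of_dvd hdvd)))

theorem polyTail_pow_le (hn : n ≠ 0) (hmu : (n : ℤ) ∣ muP f a n) (hk : 0 < k) :
    polyTail f a (n ^ k) ≤ polyTail f a n + (k - 1) * polyCycle f a n :=
  polyTail_le (polyCycle_spec f a hn).1 (polyOrbit_modEq_pow hn hmu hk)

end TailCycle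

theorem stmt_15_general (f : Polynomial ℤ) (a : ℤ)
    (p : ℕ) (k : ℕ) (hk : 0 < k)
    (hmu : (p : ℤ) ∣ muP f a p) :
    polyCycle f a (p ^ k) = polyCycle f a p ∧
      polyTail f a (p ^ k) ≤ polyTail f a p + (k - 1) * polyCycle f a p := by
  rcases eq_or_ne p 0 with rfl | hp
  · simp [zero_pow hk.ne']
  exact ⟨polyCycle_pow_eq hp hmu hk, polyTail_pow_le hp hmu hk⟩

theorem stmt_15 (f : Polynomial ℤ) (hts : PolyTowerStable f) (a : ℤ)
    (p : ℕ) (hp : p.Prime) (k : ℕ) (hk : 0 < k)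
    (hmu : (p : ℤ) ∣ muP f a p) :
    polyCycle f a (p ^ k) = polyCycle f a p ∧
      polyTail f a (p ^ k) ≤ polyTail f a p + (k - 1) * polyCycle f a p :=
  stmt_15_general f a p k hk hmu
end

section
/- Let f be a tower-stable polynomial with integer coefficients, a an integer, and p a prime number such that p divides the mod-p multiplier μ_p of f at a. Let s' be an integer with s' > ρ_{f,a}(p). Then the sequence x_k := f^{k·λ_{f,a}(p) + s'}(a) of integers converges in the ring ℤ_p of p-adic integers as k → ∞; its limit x satisfies f^{λ_{f,a}(p)}(x) = x (where f acts on ℤ_p by evaluating the polynomial), and x is algebraic over ℚ. -/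
open Polynomial

lemma polyIter_succ' (f : Polynomial ℤ) (m : ℕ) :
    polyIter f (m+1) = (polyIter f m).comp f := by
  unfold polyIter; rw [Function.iterate_succ_apply']

lemma polyIter_eval (f : Polynomial ℤ) (m : ℕ) (z : ℤ) :
    (polyIter f m).eval z = (fun z => f.eval z)^[m] z := by
  induction m generalizing z with
  | zero => simp [polyIter]
  | succ n ih =>
    rw [polyIter_succ', eval_comp, ih, Function.iterate_succ_apply]

lemma polyIter_deriv (f : Polynomial ℤ) (m : ℕ) (z : ℤ) :
    (derivative (polyIter f m)).eval z
      = ∏ i ∈ Finset.range m, (derivative f).eval ((fun z => f.eval z)^[i] z) := by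
  induction m generalizing z with
  | zero => simp [polyIter]
  | succ n ih =>
    rw [polyIter_succ', derivative_comp, eval_mul, eval_comp, ih,
      Finset.prod_range_succ']
    simp only [Function.iterate_succ_apply, Function.iterate_zero_apply]
    ring

lemma iter_congr' (f : Polynomial ℤ) {n u v : ℤ} (m : ℕ) (h : n ∣ u - v) :
    n ∣ (fun z => f.eval z)^[m] u - (fun z => f.eval z)^[m] v := by
  induction m with
  | zero => simpa using h
  | succ k ih =>
    rw [Function.iterate_succ_apply', Function.iterate_succ_apply']
    exact dvd_trans ih (sub_dvd_eval_sub _ _ f)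

lemma iter_fwd' (f : Polynomial ℤ) {n a : ℤ} {k l : ℕ}
    (h : n ∣ (fun z => f.eval z)^[k + l] a - (fun z => f.eval z)^[k] a) (d : ℕ) :
    n ∣ (fun z => f.eval z)^[k + d + l] a - (fun z => f.eval z)^[k + d] a := by
  have h2 := iter_congr' f d h
  rw [← Function.iterate_add_apply, ← Function.iterate_add_apply] at h2
  have e1 : k + d + l = d + (k + l) := by omega
  have e2 : k + d = d + k := by omega
  rw [e1, e2]; exact h2

open Filter in
theorem stmt_17 (f : Polynomial ℤ) (hts : PolyTowerStable f) (a : ℤ)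
    (p : ℕ) [Fact p.Prime] (hmu : (p : ℤ) ∣ muP f a p)
    (s' : ℕ) (hs' : polyTail f a p < s') :
    ∃ x : ℤ_[p],
      Tendsto
        (fun k : ℕ =>
          (((fun z => f.eval z)^[k * polyCycle f a p + s'] a : ℤ) : ℤ_[p]))
        atTop (nhds x) ∧
      Polynomial.aeval x (polyIter f (polyCycle f a p)) = x ∧
      IsAlgebraic ℚ (x : ℚ_[p]) := by
  have hp : p.Prime := Fact.out
  set F : ℤ → ℤ := fun z => f.eval z with hF
  set ρ : ℕ := polyTail f a p with hρdef
  set lam : ℕ := polyCycle f a p with hlamdef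
  -- the orbit mod p is eventually periodic (pigeonhole)
  have hne : ∃ i j : ℕ, i < j ∧ (p:ℤ) ∣ F^[j] a - F^[i] a := by
    have hninj : ¬ Function.Injective (fun i : Fin (p+1) => ((F^[(i:ℕ)] a : ℤ) : ZMod p)) := by
      intro hinj
      have h1 := Fintype.card_le_of_injective _ hinj
      simp only [Fintype.card_fin, ZMod.card] at h1
      omega
    rw [Function.not_injective_iff] at hninj
    obtain ⟨i, j, hij, hne⟩ := hninj
    have key : ∀ i j : Fin (p+1), (i:ℕ) < (j:ℕ) →
        ((F^[(i:ℕ)] a : ℤ) : ZMod p) = ((F^[(j:ℕ)] a : ℤ) : ZMod p) →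
        ∃ i' j' : ℕ, i' < j' ∧ (p:ℤ) ∣ F^[j'] a - F^[i'] a := by
      intro i j hlt heq
      refine ⟨i, j, hlt, ?_⟩
      have := (ZMod.intCast_eq_intCast_iff _ _ _).mp heq
      exact Int.ModEq.dvd this
    rcases lt_or_gt_of_ne (fun h : (i:ℕ) = (j:ℕ) => hne (Fin.ext h)) with h | h
    · exact key i j h hij
    · exact key j i h hij.symm
  obtain ⟨i0, j0, hij0, hdvd0⟩ := hne
  -- membership of ρ and lam in their defining sets
  have hρmem : ∃ l : ℕ, 0 < l ∧ (p:ℤ) ∣ F^[ρ + l] a - F^[ρ] a := by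
    have hTne : {k : ℕ | ∃ l : ℕ, 0 < l ∧ (p:ℤ) ∣ F^[k + l] a - F^[k] a}.Nonempty := by
      refine ⟨i0, j0 - i0, by omega, ?_⟩
      have : i0 + (j0 - i0) = j0 := by omega
      rw [this]; exact hdvd0
    exact Nat.sInf_mem hTne
  have hlammem : 0 < lam ∧ ∃ k : ℕ, (p:ℤ) ∣ F^[k + lam] a - F^[k] a := by
    have hLne : {l : ℕ | 0 < l ∧ ∃ k : ℕ, (p:ℤ) ∣ F^[k + l] a - F^[k] a}.Nonempty := by
      refine ⟨j0 - i0, by omega, i0, ?_⟩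
      have : i0 + (j0 - i0) = j0 := by omega
      rw [this]; exact hdvd0
    exact Nat.sInf_mem hLne
  obtain ⟨hlam0, k0, hk0⟩ := hlammem
  obtain ⟨l0, hl00, hl0⟩ := hρmem
  -- periodicity with period lam at every index ≥ ρ
  have P : ∀ k : ℕ, ρ ≤ k → (p:ℤ) ∣ F^[k + lam] a - F^[k] a := by
    intro k hk
    have hkl : (p:ℤ) ∣ F^[k + l0] a - F^[k] a := by
      have h := iter_fwd' f hl0 (k - ρ)
      have e : ρ + (k - ρ) = k := by omega
      rwa [e] at h
    have rep : ∀ m : ℕ, (p:ℤ) ∣ F^[k + m * l0] a - F^[k] a := by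
      intro m
      induction m with
      | zero => simp
      | succ m ih =>
        have h1 := iter_fwd' f hkl (m * l0)
        have e : k + m * l0 + l0 = k + (m + 1) * l0 := by ring
        rw [e] at h1
        have h2 := dvd_add h1 ih
        rwa [sub_add_sub_cancel] at h2
    have hk0le : k0 ≤ k0 * l0 := Nat.le_mul_of_pos_right k0 hl00
    have h1 := rep k0
    have h2 : (p:ℤ) ∣ F^[k + k0 * l0 + lam] a - F^[k + k0 * l0] a := by
      have h := iter_fwd' f hk0 (k + k0 * l0 - k0)
      have e : k0 + (k + k0 * l0 - k0) = k + k0 * l0 := by omega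
      rwa [e] at h
    have h3 := iter_fwd' f h1 lam
    -- h3 : p ∣ F^[k + lam + k0*l0] - F^[k + lam]
    have h2' : (p:ℤ) ∣ F^[k + lam + k0 * l0] a - F^[k + k0 * l0] a := by
      have e : k + k0 * l0 + lam = k + lam + k0 * l0 := by ring
      rwa [e] at h2
    have t : F^[k + lam] a - F^[k] a =
        ((F^[k + lam + k0 * l0] a - F^[k + k0 * l0] a)
          - (F^[k + lam + k0 * l0] a - F^[k + lam] a))
        + (F^[k + k0 * l0] a - F^[k] a) := by ring
    rw [t]
    exact dvd_add (dvd_sub h2' h3) h1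
  -- congruence for indices ≥ ρ that agree mod lam
  have P2 : ∀ k1 k2 : ℕ, ρ ≤ k1 → ρ ≤ k2 → k1 % lam = k2 % lam →
      (p:ℤ) ∣ F^[k1] a - F^[k2] a := by
    have aux : ∀ k m : ℕ, ρ ≤ k → (p:ℤ) ∣ F^[k + m * lam] a - F^[k] a := by
      intro k m hk
      induction m with
      | zero => simp
      | succ m ih =>
        have h1 := P (k + m * lam) (le_trans hk (by omega))
        have e : k + m * lam + lam = k + (m + 1) * lam := by ring
        rw [e] at h1
        have h2 := dvd_add h1 ih
        rwa [sub_add_sub_cancel] at h2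
    intro k1 k2 h1 h2 hmod
    rcases le_total k2 k1 with h | h
    · obtain ⟨m, hm⟩ := (Nat.modEq_iff_dvd' h).mp hmod.symm
      have e0 := Nat.sub_add_cancel h
      rw [hm] at e0
      have e : k1 = k2 + m * lam := by rw [← e0]; ring
      rw [e]
      exact aux k2 m h2
    · obtain ⟨m, hm⟩ := (Nat.modEq_iff_dvd' h).mp hmod
      have e0 := Nat.sub_add_cancel h
      rw [hm] at e0
      have e : k2 = k1 + m * lam := by rw [← e0]; ring
      rw [e]
      have h' := (dvd_neg).mpr (aux k1 m h1)
      rwa [neg_sub] at h'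
  -- a factor of μ_p is divisible by p
  have hμfac : ∃ i : ℕ, i < lam ∧ (p:ℤ) ∣ (Polynomial.derivative f).eval (F^[i + ρ] a) := by
    have hmu' : (p:ℤ) ∣ ∏ i ∈ Finset.range lam,
        (Polynomial.derivative f).eval (F^[i] (F^[ρ] a)) := by
      have e : muP f a p = (Polynomial.derivative (polyIter f lam)).eval (F^[ρ] a) := rfl
      rw [e, polyIter_deriv] at hmu
      exact hmu
    have hprime : Prime (p:ℤ) := Nat.prime_iff_prime_int.mp hp
    obtain ⟨i, hi, hdvd⟩ := hprime.exists_mem_finset_dvd hmu'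
    refine ⟨i, Finset.mem_range.mp hi, ?_⟩
    rwa [← Function.iterate_add_apply] at hdvd
  obtain ⟨i1, hi1, hdvd1⟩ := hμfac
  -- p divides the derivative of g = f^λ at every orbit point with index ≥ ρ
  have B : ∀ t : ℕ, ρ ≤ t →
      (p:ℤ) ∣ (Polynomial.derivative (polyIter f lam)).eval (F^[t] a) := by
    intro t ht
    rw [polyIter_deriv]
    have hsub : t ≤ i1 + ρ + t * lam :=
      le_trans (Nat.le_mul_of_pos_right t hlam0) (by omega)
    set j : ℕ := (i1 + ρ + t * lam - t) % lam with hj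
    have hjlt : j < lam := Nat.mod_lt _ hlam0
    have hmod : (j + t) % lam = (i1 + ρ) % lam := by
      have h1 : j + t ≡ (i1 + ρ + t * lam - t) + t [MOD lam] :=
        (Nat.mod_modEq _ lam).add_right t
      have h3 : (i1 + ρ + t * lam - t) + t = i1 + ρ + t * lam := by omega
      have h4 : i1 + ρ + t * lam ≡ i1 + ρ [MOD lam] :=
        ((Nat.modEq_iff_dvd' (by omega)).mpr (by
          have : i1 + ρ + t * lam - (i1 + ρ) = t * lam := by omega
          rw [this]
          exact dvd_mul_left lam t)).symm
      exact h1.trans (by rw [h3]; exact h4)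
    have hcongr := P2 (j + t) (i1 + ρ) (by omega) (by omega) hmod
    have hdvdj : (p:ℤ) ∣ (Polynomial.derivative f).eval (F^[j + t] a) := by
      have hdiff : (p:ℤ) ∣ (Polynomial.derivative f).eval (F^[j + t] a)
          - (Polynomial.derivative f).eval (F^[i1 + ρ] a) :=
        dvd_trans hcongr (Polynomial.sub_dvd_eval_sub _ _ _)
      have h5 := dvd_add hdiff hdvd1
      rwa [sub_add_cancel] at h5
    rw [Function.iterate_add_apply] at hdvdj
    exact dvd_trans hdvdj (Finset.dvd_prod_of_mem _ (Finset.mem_range.mpr hjlt))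
  -- the sequence
  set X : ℕ → ℤ := fun k => F^[k * lam + s'] a with hX
  set g : Polynomial ℤ := polyIter f lam with hg
  have hρs' : ρ ≤ s' := le_of_lt hs'
  have hXsucc : ∀ k : ℕ, X (k+1) = g.eval (X k) := by
    intro k
    rw [hg, polyIter_eval]
    show F^[(k+1) * lam + s'] a = F^[lam] (F^[k * lam + s'] a)
    rw [← Function.iterate_add_apply]
    congr 1
    ring
  -- contraction
  have C : ∀ k : ℕ, (p:ℤ)^(k+1) ∣ X (k+1) - X k := by
    intro k
    induction k with
    | zero =>
      have h1 := P s' hρs'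
      have e1 : X 1 = F^[s' + lam] a := by
        show F^[1 * lam + s'] a = _
        congr 1
        ring
      have e0 : X 0 = F^[s'] a := by
        show F^[0 * lam + s'] a = _
        congr 1
        ring
      rw [e1, e0, pow_one]
      exact h1
    | succ k ih =>
      obtain ⟨c, hc⟩ := g.binomExpansion (X k) (X (k+1) - X k)
      rw [add_sub_cancel] at hc
      have e : X (k+1+1) - X (k+1) = (Polynomial.derivative g).eval (X k) * (X (k+1) - X k)
          + c * (X (k+1) - X k)^2 := by
        rw [hXsucc (k+1), hc, hXsucc k]
        ring
      rw [e]
      have hB : (p:ℤ) ∣ (Polynomial.derivative g).eval (X k) := B (k * lam + s') (by omega)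
      refine dvd_add ?_ ?_
      · rw [pow_succ, mul_comm ((p:ℤ)^(k+1)) (p:ℤ)]
        exact mul_dvd_mul hB ih
      · refine Dvd.dvd.mul_left ?_ c
        have h2 : (p:ℤ)^(2*(k+1)) ∣ (X (k+1) - X k)^2 := by
          rw [two_mul, pow_add, sq]
          exact mul_dvd_mul ih ih
        exact dvd_trans (pow_dvd_pow _ (by omega)) h2
  -- Cauchy sequence in ℤ_[p]
  set cs : ℕ → ℤ_[p] := fun k => ((X k : ℤ) : ℤ_[p]) with hcs
  have hp1 : (1:ℝ) < (p:ℝ) := by exact_mod_cast hp.one_lt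
  have hdist : ∀ k : ℕ, dist (cs k) (cs (k+1)) ≤ (p:ℝ)⁻¹ * ((p:ℝ)⁻¹)^k := by
    intro k
    have h1 : cs k - cs (k+1) = ((X k - X (k+1) : ℤ) : ℤ_[p]) := by push_cast; ring
    have h2 : ((p:ℤ))^(k+1) ∣ X k - X (k+1) := by
      have h' := dvd_neg.mpr (C k)
      rwa [neg_sub] at h'
    have h3 : ‖((X k - X (k+1) : ℤ) : ℤ_[p])‖ ≤ (p:ℝ) ^ (-((k+1:ℕ)) : ℤ) :=
      PadicInt.norm_int_le_pow_iff_dvd.mpr (by exact_mod_cast h2)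
    have h4 : (p:ℝ) ^ (-((k+1:ℕ)) : ℤ) = (p:ℝ)⁻¹ * ((p:ℝ)⁻¹)^k := by
      rw [zpow_neg, zpow_natCast, pow_succ, mul_inv, inv_pow]
      ring
    rw [dist_eq_norm, h1]
    rw [h4] at h3
    exact h3
  have hr : (p:ℝ)⁻¹ < 1 := by
    rw [inv_lt_one_iff₀]
    right
    exact hp1
  have hcauchy : CauchySeq cs := cauchySeq_of_le_geometric _ _ hr hdist
  obtain ⟨x, hx⟩ := cauchySeq_tendsto_of_complete hcauchy
  -- the fixed point equation
  have hc1 : ∀ k : ℕ, cs (k+1) = Polynomial.aeval (cs k) g := by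
    intro k
    show ((X (k+1) : ℤ) : ℤ_[p]) = _
    rw [hXsucc k, Polynomial.aeval_def, algebraMap_int_eq,
      show cs k = Int.castRingHom ℤ_[p] (X k) from rfl,
      Polynomial.eval₂_at_apply]
    rfl
  have h1t : Tendsto (fun k => cs (k+1)) atTop (nhds x) := hx.comp (tendsto_add_atTop_nat 1)
  have h2t : Tendsto (fun k => Polynomial.aeval (cs k) g) atTop (nhds (Polynomial.aeval x g)) :=
    (g.continuous_aeval.tendsto x).comp hx
  have h1t' : Tendsto (fun k => Polynomial.aeval (cs k) g) atTop (nhds x) := by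
    simpa only [← hc1] using h1t
  have hfix : Polynomial.aeval x g = x := tendsto_nhds_unique h2t h1t'
  -- g ≠ X since p ∣ μ_p
  have hgX : g ≠ Polynomial.X := by
    intro h
    have hμ1 : muP f a p = 1 := by
      show (Polynomial.derivative g).eval (F^[ρ] a) = 1
      rw [h]
      simp
    rw [hμ1] at hmu
    have h2 := Int.le_of_dvd one_pos hmu
    have h3 : (1:ℤ) < (p:ℤ) := by exact_mod_cast hp.one_lt
    omega
  refine ⟨x, hx, hfix, ?_⟩
  refine ⟨(g.map (algebraMap ℤ ℚ)) - Polynomial.X, ?_, ?_⟩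
  · intro h0
    apply hgX
    have h1 : g.map (algebraMap ℤ ℚ) = Polynomial.X := by rwa [sub_eq_zero] at h0
    have h2 : g.map (algebraMap ℤ ℚ) = Polynomial.X.map (algebraMap ℤ ℚ) := by
      simpa using h1
    exact Polynomial.map_injective _ (algebraMap ℤ ℚ).injective_int h2
  · rw [map_sub, Polynomial.aeval_X, Polynomial.aeval_map_algebraMap,
      ← PadicInt.algebraMap_apply, Polynomial.aeval_algebraMap_apply, hfix, sub_self]
end
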